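/- arXiv:2311.06813 — 5 statements merged into one kernel-verified Lean document; each statement's English description precedes it below -/
import Mathlib

section
/- Let a ∈ 𝒞 be nonzero with λ(a) > 0. Then the sequence of powers (a^k)_{k≥1} is regular and converges weakly to 0. -/
open Pointwise

noncomputable section

/-- A set of rational numbers is *left-finite* if below every rational number
it has only finitely many elements. -/
def LeftFinite (A : Set ℚ) : Prop := ∀ r : ℚ, {q ∈ A | q < r}.Finite

theorem LeftFinite.mono {A B : Set ℚ} (h : LeftFinite B) (hAB : A ⊆ B) : LeftFinite A :=
  fun r => (h r).subset fun _ hq => ⟨hAB hq.1, hq.2⟩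

theorem LeftFinite.union {A B : Set ℚ} (hA : LeftFinite A) (hB : LeftFinite B) :
    LeftFinite (A ∪ B) := by
  intro r
  have hsub : {q ∈ A ∪ B | q < r} ⊆ {q ∈ A | q < r} ∪ {q ∈ B | q < r} := by
    rintro q ⟨hq | hq, hr⟩
    · exact Or.inl ⟨hq, hr⟩
    · exact Or.inr ⟨hq, hr⟩
  exact ((hA r).union (hB r)).subset hsub

theorem Set.Finite.leftFinite {A : Set ℚ} (h : A.Finite) : LeftFinite A :=
  fun _ => h.subset fun _ hq => hq.1

theorem LeftFinite.exists_lb {A : Set ℚ} (h : LeftFinite A) : ∃ m : ℚ, ∀ a ∈ A, m ≤ a := by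
  rcases A.eq_empty_or_nonempty with rfl | ⟨a₀, ha₀⟩
  · exact ⟨0, by simp⟩
  · obtain ⟨m, hm⟩ := (h a₀).bddBelow
    refine ⟨min m a₀, fun a ha => ?_⟩
    rcases lt_or_ge a a₀ with hlt | hle
    · exact le_trans (min_le_left _ _) (hm ⟨ha, hlt⟩)
    · exact le_trans (min_le_right _ _) hle

theorem LeftFinite.addSet {A B : Set ℚ} (hA : LeftFinite A) (hB : LeftFinite B) :
    LeftFinite (A + B) := by
  obtain ⟨mA, hmA⟩ := hA.exists_lb
  obtain ⟨mB, hmB⟩ := hB.exists_lb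
  intro r
  apply Set.Finite.subset (((hA (r - mB)).prod (hB (r - mA))).image fun p : ℚ × ℚ => p.1 + p.2)
  rintro q ⟨hq, hqr⟩
  rw [Set.mem_add] at hq
  obtain ⟨a, ha, b, hb, rfl⟩ := hq
  exact ⟨(a, b), ⟨⟨ha, by linarith [hmB b hb]⟩, hb, by linarith [hmA a ha]⟩, rfl⟩

/-- The Levi-Civita field over a coefficient ring `K`, realized as the subring of
Hahn series over `ℚ` consisting of those series with left-finite support.
(An element is a function `ℚ → K` with left-finite support; addition is pointwise
and multiplication is convolution.) -/
def LeviCivitaField (K : Type) [CommRing K] : Subring (HahnSeries ℚ K) where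
  carrier := {x | LeftFinite x.support}
  zero_mem' := by
    have h : (0 : HahnSeries ℚ K).support = (∅ : Set ℚ) := HahnSeries.support_zero
    exact Set.Finite.leftFinite (by rw [h]; exact Set.finite_empty)
  one_mem' := by
    refine Set.Finite.leftFinite ((Set.finite_singleton (0 : ℚ)).subset ?_)
    intro q hq
    by_contra hq0
    have hq0' : q ≠ 0 := by simpa using hq0
    have : (1 : HahnSeries ℚ K).coeff q = 0 := by
      rw [HahnSeries.coeff_one, if_neg hq0']
    exact hq this
  add_mem' := fun {x y} hx hy =>
    LeftFinite.mono (LeftFinite.union hx hy) (HahnSeries.support_add_subset _ _)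
  neg_mem' := fun {x} hx => LeftFinite.mono hx (le_of_eq HahnSeries.support_neg)
  mul_mem' := fun {x y} hx hy =>
    LeftFinite.mono (LeftFinite.addSet hx hy) HahnSeries.support_mul_subset

namespace LeviCivitaField

variable {K : Type} [CommRing K]

/-- The coefficient `a[q]` of an element of the Levi-Civita field. -/
def coeff (x : LeviCivitaField K) (q : ℚ) : K := (x : HahnSeries ℚ K).coeff q

/-- The support `supp a` of an element of the Levi-Civita field. -/
def supp (x : LeviCivitaField K) : Set ℚ := (x : HahnSeries ℚ K).support

theorem leftFinite_supp (x : LeviCivitaField K) : LeftFinite (supp x) := x.2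

/-- `λ(a)`: the minimum of the support of `a` (for nonzero `a`; `0` for `a = 0`). -/
def lam (x : LeviCivitaField K) : ℚ := (x : HahnSeries ℚ K).order

/-- `a` is at most finite if `a[q] = 0` for all `q < 0`. -/
def AtMostFinite (x : LeviCivitaField K) : Prop := ∀ q : ℚ, q < 0 → coeff x q = 0

/-- A sequence is regular if the union of the supports of its elements is left-finite. -/
def Regular (a : ℕ → LeviCivitaField K) : Prop := LeftFinite (⋃ n, supp (a n))

/-- The seminorm `‖a‖_r = max {|a[q]| : q ≤ r, a[q] ≠ 0}` (equal to `0` if no such `q` exists). -/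
def wnorm [Norm K] (x : LeviCivitaField K) (r : ℝ) : ℝ :=
  sSup ((fun q : ℚ => ‖coeff x q‖) '' {q : ℚ | (q : ℝ) ≤ r ∧ coeff x q ≠ 0})

/-- Weak convergence: `a_n →wk l` iff for every real `r > 0` there is `N` with
`‖a_n − l‖_{1/r} < r` for all `n > N`. -/
def WeakTendsto [Norm K] (a : ℕ → LeviCivitaField K) (l : LeviCivitaField K) : Prop :=
  ∀ r : ℝ, 0 < r → ∃ N : ℕ, ∀ n : ℕ, n > N → wnorm (a n - l) (1 / r) < r

/-- Positivity on the real Levi-Civita field: `x ≻ 0` iff `x ≠ 0` and `x[λ(x)] > 0`. -/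
def Pos (x : LeviCivitaField ℝ) : Prop := x ≠ 0 ∧ 0 < coeff x (lam x)

/-- `x ⪰ 0` on the real Levi-Civita field. -/
def Nonneg (x : LeviCivitaField ℝ) : Prop := x = 0 ∨ Pos x

/-- `x ⪯ y` on the real Levi-Civita field. -/
def Le (x y : LeviCivitaField ℝ) : Prop := Nonneg (y - x)

/-- An element of the complex Levi-Civita field is *real* if all its coefficients are real;
this identifies `ℛ` with the subring `{z ∈ 𝒞 : z[q] ∈ ℝ for all q}` of `𝒞`. -/
def IsReal (x : LeviCivitaField ℂ) : Prop := ∀ q : ℚ, (coeff x q).im = 0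

/-- `x ≻ 0` for elements of `ℛ` viewed inside `𝒞`: `x` is real, nonzero,
and its leading coefficient is positive. -/
def PosC (x : LeviCivitaField ℂ) : Prop := IsReal x ∧ x ≠ 0 ∧ 0 < (coeff x (lam x)).re

/-- `x ⪰ 0` for elements of `ℛ` viewed inside `𝒞`. -/
def NonnegC (x : LeviCivitaField ℂ) : Prop := x = 0 ∨ PosC x

/-- `x ⪯ y` for elements of `ℛ` viewed inside `𝒞`. -/
def LeC (x y : LeviCivitaField ℂ) : Prop := NonnegC (y - x)

/-- `x ≺ y` for elements of `ℛ` viewed inside `𝒞`. -/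
def LtC (x y : LeviCivitaField ℂ) : Prop := PosC (y - x)

/-- Conjugation on the complex Levi-Civita field: `conj(z)[q] = conj (z[q])`. -/
def conj (x : LeviCivitaField ℂ) : LeviCivitaField ℂ :=
  ⟨⟨fun q => starRingEnd ℂ (coeff x q),
    (x : HahnSeries ℚ ℂ).isPWO_support.mono (fun q hq => by
      simp only [Function.mem_support, ne_eq, map_eq_zero] at hq
      exact hq)⟩,
   LeftFinite.mono x.2 (fun q hq => by
      have hq' : starRingEnd ℂ (coeff x q) ≠ 0 := hq
      have : coeff x q ≠ 0 := fun h => hq' (by rw [h, map_zero])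
      exact this)⟩

/-- The monomial `d^q`: the element supported at `{q}` with value `1`. -/
def dpow (q : ℚ) : LeviCivitaField ℂ :=
  ⟨HahnSeries.single q (1 : ℂ),
    Set.Finite.leftFinite ((Set.finite_singleton q).subset HahnSeries.support_single_subset)⟩

end LeviCivitaField


open LeviCivitaField

lemma supp_pow_bound (a : LeviCivitaField ℂ) (ha : a ≠ 0) (n : ℕ) {q : ℚ}
    (hq : coeff (a ^ n) q ≠ 0) : (n : ℚ) * lam a ≤ q := by
  have hcoe : ((a ^ n : LeviCivitaField ℂ) : HahnSeries ℚ ℂ) = (a : HahnSeries ℚ ℂ) ^ n := by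
    push_cast; ring
  have hq' : ((a : HahnSeries ℚ ℂ) ^ n).coeff q ≠ 0 := by
    rw [← hcoe]; exact hq
  have hord := HahnSeries.order_le_of_coeff_ne_zero hq'
  rwa [HahnSeries.order_pow, nsmul_eq_mul] at hord

/-- if `a ≠ 0` and `λ(a) > 0` then `(a^k)_{k ≥ 1}` is regular
and converges weakly to `0`. -/
theorem pow_regular_weakTendsto_zero_of_lam_pos (a : LeviCivitaField ℂ)
    (ha : a ≠ 0) (hlam : 0 < lam a) :
    Regular (fun k => a ^ (k + 1)) ∧ WeakTendsto (fun k => a ^ (k + 1)) 0 := by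
  constructor
  · intro r
    obtain ⟨M, hM⟩ := exists_nat_ge (r / lam a)
    have hrM : r ≤ (M : ℚ) * lam a := by
      rw [div_le_iff₀ hlam] at hM; linarith
    have hsub : {q ∈ ⋃ n, supp ((fun k => a ^ (k + 1)) n) | q < r} ⊆
        ⋃ k ∈ Finset.range M, {q ∈ supp (a ^ (k + 1)) | q < r} := by
      rintro q ⟨hq, hqr⟩
      simp only [Set.mem_iUnion] at hq
      obtain ⟨k, hk⟩ := hq
      have hb := supp_pow_bound a ha (k + 1) hk
      have hkM : k ∈ Finset.range M := by
        rw [Finset.mem_range]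
        by_contra hkM
        push_neg at hkM
        have : (M : ℚ) ≤ (k + 1 : ℕ) := by exact_mod_cast Nat.le_succ_of_le hkM
        have : (M : ℚ) * lam a ≤ ((k + 1 : ℕ) : ℚ) * lam a :=
          mul_le_mul_of_nonneg_right this hlam.le
        push_cast at this hb
        linarith
      exact Set.mem_biUnion hkM ⟨hk, hqr⟩
    exact (Set.Finite.biUnion (Finset.range M).finite_toSet
      (fun k _ => leftFinite_supp (a ^ (k + 1)) r)).subset hsub
  · intro r hr
    obtain ⟨N, hN⟩ := exists_nat_gt ((1 / r) / (lam a : ℝ))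
    refine ⟨N, fun n hn => ?_⟩
    have hlamR : (0 : ℝ) < (lam a : ℝ) := by exact_mod_cast hlam
    have h1 : 1 / r < (N : ℝ) * (lam a : ℝ) := by
      rw [div_lt_iff₀ hlamR] at hN; linarith
    have hempty : {q : ℚ | (q : ℝ) ≤ 1 / r ∧ coeff (a ^ (n + 1) - 0) q ≠ 0} = ∅ := by
      ext q
      simp only [Set.mem_empty_iff_false, Set.mem_setOf_eq, iff_false, not_and]
      intro hq hc
      rw [sub_zero] at hc
      have hb := supp_pow_bound a ha (n + 1) hc
      have hNn : (N : ℚ) ≤ ((n + 1 : ℕ) : ℚ) := by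
        exact_mod_cast Nat.le_succ_of_le hn.le
      have hb2 : (N : ℚ) * lam a ≤ q :=
        le_trans (mul_le_mul_of_nonneg_right hNn hlam.le) hb
      have : ((N : ℚ) * lam a : ℝ) ≤ (q : ℝ) := by exact_mod_cast hb2
      push_cast at this
      linarith
    unfold wnorm
    rw [hempty, Set.image_empty, Real.sSup_empty]
    exact hr
end
end

section
/- Let a ∈ 𝒞 satisfy a[q] = 0 for all q < 0, a[0] ≠ 0, and complex modulus |a[0]| < 1. Then the sequence of powers (a^k)_{k≥1} is regular and converges weakly to 0. -/
open Pointwise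

noncomputable section

open LeviCivitaField


lemma aux_coeff_pow_eq_zero {B : HahnSeries ℚ ℂ} {lam : ℚ}
    (hB : ∀ q : ℚ, q < lam → B.coeff q = 0) :
    ∀ (j : ℕ) (q : ℚ), q < (j : ℚ) * lam → (B ^ j).coeff q = 0 := by
  intro j
  induction j with
  | zero =>
    intro q hq
    rw [pow_zero, HahnSeries.coeff_one, if_neg]
    intro h; rw [h] at hq; simp at hq
  | succ j ih =>
    intro q hq
    by_contra hne
    rw [pow_succ] at hne
    have hmem : q ∈ (B ^ j * B).support := hne
    obtain ⟨s, hs, t, ht, rfl⟩ := Set.mem_add.mp (HahnSeries.support_mul_subset hmem)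
    have hs' : (j : ℚ) * lam ≤ s := by
      by_contra h
      exact hs (ih s (not_le.mp h))
    have ht' : lam ≤ t := by
      by_contra h
      exact ht (hB t (not_le.mp h))
    push_cast at hq
    linarith

/-- iterated pointwise sumset -/
def iterAdd (G : Finset ℚ) : ℕ → Finset ℚ
  | 0 => {0}
  | m + 1 => iterAdd G m + G

lemma aux_pow_support {A : HahnSeries ℚ ℂ} {G : Finset ℚ} {δ r : ℚ} (hδ : 0 < δ)
    (hS : ∀ s ∈ A.support, s < r → 0 < s → s ∈ G ∧ δ ≤ s)
    (hS0 : ∀ s ∈ A.support, 0 ≤ s) :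
    ∀ k, ∀ q ∈ (A ^ k).support, q < r → ∃ m : ℕ, q ∈ iterAdd G m ∧ (m : ℚ) * δ ≤ q := by
  intro k
  induction k with
  | zero =>
    intro q hq _
    rw [pow_zero] at hq
    have : q = 0 := by
      by_contra h
      exact hq (by rw [HahnSeries.coeff_one, if_neg h])
    exact ⟨0, by simp [this, iterAdd], by simp [this]⟩
  | succ k ih =>
    intro q hq hqr
    rw [pow_succ] at hq
    obtain ⟨s, hs, t, ht, rfl⟩ := Set.mem_add.mp (HahnSeries.support_mul_subset hq)
    have ht0 : 0 ≤ t := hS0 t ht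
    have hsr : s < r := by linarith
    obtain ⟨m, hm, hmδ⟩ := ih s hs hsr
    rcases eq_or_lt_of_le ht0 with h0 | hpos
    · exact ⟨m, by simpa [← h0] using hm, by linarith⟩
    · have htr : t < r := by
        have hs0 : 0 ≤ s := le_trans (mul_nonneg (Nat.cast_nonneg m) hδ.le) hmδ
        linarith
      obtain ⟨htG, htδ⟩ := hS t ht htr hpos
      refine ⟨m + 1, Finset.add_mem_add hm htG, ?_⟩
      push_cast
      linarith

/-- if `a` is at most finite with `a[0] ≠ 0` and `|a[0]| < 1`,
then `(a^k)_{k ≥ 1}` is regular and converges weakly to `0`. -/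
theorem pow_regular_weakTendsto_zero_of_abs_lt_one (a : LeviCivitaField ℂ)
    (hfin : AtMostFinite a) (h0 : coeff a 0 ≠ 0)
    (habs : ‖coeff a 0‖ < 1) :
    Regular (fun k => a ^ (k + 1)) ∧ WeakTendsto (fun k => a ^ (k + 1)) 0 := by
  classical
  have hsuppA : ∀ s ∈ (a : HahnSeries ℚ ℂ).support, 0 ≤ s := by
    intro s hs
    by_contra h
    exact hs (hfin s (not_le.mp h))
  constructor
  · -- Regularity
    intro r
    have hF : {q ∈ supp a | q < r}.Finite := a.2 r
    set Fp : Finset ℚ := hF.toFinset.filter (fun q => 0 < q) with hFp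
    set δ : ℚ := if h : Fp.Nonempty then Fp.min' h else 1 with hδdef
    have hδpos : 0 < δ := by
      rw [hδdef]
      split_ifs with h
      · exact (Finset.mem_filter.mp (Fp.min'_mem h)).2
      · norm_num
    have hS : ∀ s ∈ (a : HahnSeries ℚ ℂ).support, s < r → 0 < s → s ∈ Fp ∧ δ ≤ s := by
      intro s hs hsr hspos
      have hmem : s ∈ Fp :=
        Finset.mem_filter.mpr ⟨hF.mem_toFinset.mpr ⟨hs, hsr⟩, hspos⟩
      refine ⟨hmem, ?_⟩
      rw [hδdef]
      split_ifs with h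
      · exact Fp.min'_le s hmem
      · exact absurd ⟨s, hmem⟩ h
    set n₀ : ℕ := ⌈r / δ⌉₊ with hn₀
    apply Set.Finite.subset (((Finset.range (n₀ + 1)).biUnion (iterAdd Fp)).finite_toSet)
    rintro q ⟨hq, hqr⟩
    obtain ⟨n, hn⟩ := Set.mem_iUnion.mp hq
    have hq' : q ∈ ((a : HahnSeries ℚ ℂ) ^ (n + 1)).support :=
      (SubmonoidClass.coe_pow a (n + 1)) ▸ hn
    obtain ⟨m, hmem, hmδ⟩ := aux_pow_support hδpos hS hsuppA (n + 1) q hq' hqr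
    have hmn : (m : ℚ) ≤ (n₀ : ℚ) :=
      le_trans (le_of_lt ((lt_div_iff₀ hδpos).mpr (lt_of_le_of_lt hmδ hqr))) (Nat.le_ceil _)
    have hmn' : m ≤ n₀ := by exact_mod_cast hmn
    exact Finset.mem_coe.mpr (Finset.mem_biUnion.mpr ⟨m, Finset.mem_range.mpr (by omega), hmem⟩)
  · -- Weak convergence
    intro r hr
    set c : ℂ := coeff a 0 with hc
    set bb : LeviCivitaField ℂ := a - ⟨HahnSeries.single 0 c,
      Set.Finite.leftFinite ((Set.finite_singleton 0).subset HahnSeries.support_single_subset)⟩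
      with hbb
    set A : HahnSeries ℚ ℂ := (a : HahnSeries ℚ ℂ) with hA
    set B : HahnSeries ℚ ℂ := (bb : HahnSeries ℚ ℂ) with hB
    have hBval : B = A - HahnSeries.single 0 c := rfl
    have hABC : A = B + HahnSeries.single 0 c := by rw [hBval]; ring
    have hBzero : ∀ q : ℚ, q ≤ 0 → B.coeff q = 0 := by
      intro q hq
      rw [hBval, HahnSeries.coeff_sub]
      rcases lt_or_eq_of_le hq with h | h
      · rw [show A.coeff q = 0 from hfin q h, HahnSeries.coeff_single_of_ne (ne_of_lt h),
          zero_sub, neg_zero]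
      · rw [h, HahnSeries.coeff_single_same]
        exact sub_eq_zero.mpr rfl
    have hBsupfin : {q ∈ B.support | q < 1}.Finite := bb.2 1
    set FB := hBsupfin.toFinset with hFB
    set lam : ℚ := if h : FB.Nonempty then min 1 (FB.min' h) else 1 with hlamdef
    have hlampos : 0 < lam := by
      rw [hlamdef]; split_ifs with h
      · refine lt_min one_pos ?_
        have hmem := hBsupfin.mem_toFinset.mp (FB.min'_mem h)
        by_contra hle
        exact hmem.1 (hBzero _ (not_lt.mp hle))
      · norm_num
    have hBlam : ∀ q : ℚ, q < lam → B.coeff q = 0 := by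
      intro q hq
      by_contra hne
      have hq1 : q < 1 := lt_of_lt_of_le hq
        (by rw [hlamdef]; split_ifs with h; exacts [min_le_left _ _, le_refl 1])
      have hmem : q ∈ FB := hBsupfin.mem_toFinset.mpr ⟨hne, hq1⟩
      have hge : lam ≤ q := by
        rw [hlamdef, dif_pos ⟨q, hmem⟩]
        exact le_trans (min_le_right _ _) (FB.min'_le q hmem)
      exact absurd hq (not_lt.mpr hge)
    set J : ℕ := ⌈(1 / r) / (lam : ℝ)⌉₊ + 1 with hJ
    have hlamposR : (0 : ℝ) < (lam : ℝ) := by exact_mod_cast hlampos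
    have hJlam : 1 / r < (J : ℝ) * (lam : ℝ) := by
      have h1 : ((1 / r) / (lam : ℝ)) < (J : ℝ) :=
        lt_of_le_of_lt (Nat.le_ceil _) (by rw [hJ]; push_cast; linarith)
      calc 1 / r = ((1 / r) / (lam : ℝ)) * lam := by field_simp
        _ < (J : ℝ) * lam := mul_lt_mul_of_pos_right h1 hlamposR
    have hvanish : ∀ j : ℕ, J ≤ j → ∀ q : ℚ, (q : ℝ) ≤ 1 / r → (B ^ j).coeff q = 0 := by
      intro j hj q hq
      apply aux_coeff_pow_eq_zero hBlam
      have hlt : (q : ℝ) < ((j : ℚ) * lam : ℚ) := by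
        push_cast
        refine lt_of_le_of_lt hq (lt_of_lt_of_le hJlam ?_)
        exact mul_le_mul_of_nonneg_right (by exact_mod_cast hj) hlamposR.le
      exact_mod_cast hlt
    obtain ⟨q₀, hq₀⟩ := exists_rat_gt (1 / r)
    have hMj : ∀ j : ℕ, ∃ Mj : ℝ, 0 ≤ Mj ∧
        ∀ q : ℚ, (q : ℝ) ≤ 1 / r → ‖(B ^ j).coeff q‖ ≤ Mj := by
      intro j
      have hfin' : {q ∈ (B ^ j).support | q < q₀}.Finite := by
        have h2 := (bb ^ j).2 q₀
        rwa [show ((bb ^ j : LeviCivitaField ℂ) : HahnSeries ℚ ℂ) = B ^ j from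
          SubmonoidClass.coe_pow bb j] at h2
      obtain ⟨M0, hM0⟩ := (hfin'.image (fun q => ‖(B ^ j).coeff q‖)).bddAbove
      refine ⟨max M0 0, le_max_right _ _, ?_⟩
      intro q hq
      by_cases hzero : (B ^ j).coeff q = 0
      · simp [hzero]
      · have hqq : q < q₀ := by exact_mod_cast lt_of_le_of_lt hq hq₀
        exact le_trans (hM0 (Set.mem_image_of_mem _ ⟨hzero, hqq⟩)) (le_max_left _ _)
    choose Mf hMf0 hMf using hMj
    set M : ℝ := ∑ j ∈ Finset.range (J + 1), Mf j with hM
    have hM0 : 0 ≤ M := Finset.sum_nonneg (fun j _ => hMf0 j)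
    have hMle : ∀ j, j ≤ J → Mf j ≤ M := fun j hj =>
      Finset.single_le_sum (fun i _ => hMf0 i) (Finset.mem_range.mpr (by omega))
    have hρ0 : 0 < ‖c‖ := norm_pos_iff.mpr h0
    have habs' : ‖c‖ < 1 := habs
    have key : ∀ n : ℕ, J ≤ n → ∀ q : ℚ, (q : ℝ) ≤ 1 / r →
        ‖(A ^ n).coeff q‖ ≤
          ((J : ℝ) + 1) * (M * ((n : ℝ) ^ J * (‖c‖) ^ (n - J))) := by
      intro n hnJ q hq
      have hexp : A ^ n = ∑ j ∈ Finset.range (n + 1),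
          B ^ j * HahnSeries.single 0 (c ^ (n - j) * (n.choose j : ℂ)) := by
        rw [hABC, add_pow]
        refine Finset.sum_congr rfl (fun j _ => ?_)
        rw [mul_assoc]
        congr 1
        rw [← HahnSeries.C_apply, ← map_pow, ← map_natCast (HahnSeries.C : ℂ →+* HahnSeries ℚ ℂ),
          ← map_mul, HahnSeries.C_apply]
      have hco : (A ^ n).coeff q = ∑ j ∈ Finset.range (n + 1),
          ((B ^ j).coeff q) * (c ^ (n - j) * (n.choose j : ℂ)) := by
        rw [hexp]
        have hms := map_sum (HahnSeries.coeff.addMonoidHom q)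
          (fun j => B ^ j * HahnSeries.single 0 (c ^ (n - j) * (n.choose j : ℂ)))
          (Finset.range (n + 1))
        simp only [HahnSeries.coeff.addMonoidHom_apply] at hms
        rw [hms]
        exact Finset.sum_congr rfl (fun j _ => HahnSeries.coeff_mul_single_zero)
      have hsum : ∑ j ∈ Finset.range (n + 1), ((B ^ j).coeff q) * (c ^ (n - j) * (n.choose j : ℂ))
          = ∑ j ∈ Finset.range (J + 1),
            ((B ^ j).coeff q) * (c ^ (n - j) * (n.choose j : ℂ)) := by
        symm
        apply Finset.sum_subset (Finset.range_subset_range.mpr (by omega))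
        intro j _ hj
        rw [Finset.mem_range] at hj
        rw [hvanish j (by omega) q hq, zero_mul]
      rw [hco, hsum]
      calc ‖∑ j ∈ Finset.range (J + 1),
            ((B ^ j).coeff q) * (c ^ (n - j) * (n.choose j : ℂ))‖
          ≤ ∑ j ∈ Finset.range (J + 1),
            ‖((B ^ j).coeff q) * (c ^ (n - j) * (n.choose j : ℂ))‖ :=
            norm_sum_le _ _
        _ ≤ ∑ _j ∈ Finset.range (J + 1), M * ((n : ℝ) ^ J * (‖c‖) ^ (n - J)) := by
            apply Finset.sum_le_sum
            intro j hj
            rw [Finset.mem_range] at hj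
            have hjJ : j ≤ J := by omega
            rw [norm_mul, norm_mul, norm_pow]
            have h1 : ‖(B ^ j).coeff q‖ ≤ M := le_trans (hMf j q hq) (hMle j hjJ)
            have h2 : (‖c‖) ^ (n - j) ≤ (‖c‖) ^ (n - J) :=
              pow_le_pow_of_le_one hρ0.le habs'.le (by omega)
            have h3 : ‖(n.choose j : ℂ)‖ ≤ (n : ℝ) ^ J := by
              rw [Complex.norm_natCast]
              calc ((n.choose j : ℝ)) ≤ ((n ^ j : ℕ) : ℝ) := by
                    exact_mod_cast Nat.choose_le_pow n j
                _ ≤ ((n ^ J : ℕ) : ℝ) := by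
                    exact_mod_cast Nat.pow_le_pow_right (by omega) hjJ
                _ = (n : ℝ) ^ J := by push_cast; ring
            calc ‖(B ^ j).coeff q‖ *
                  ((‖c‖) ^ (n - j) * ‖(n.choose j : ℂ)‖)
                ≤ M * ((‖c‖) ^ (n - J) * (n : ℝ) ^ J) := by
                  apply mul_le_mul h1 _ (by positivity) hM0
                  exact mul_le_mul h2 h3 (by positivity) (by positivity)
              _ = M * ((n : ℝ) ^ J * (‖c‖) ^ (n - J)) := by ring
        _ = ((J : ℝ) + 1) * (M * ((n : ℝ) ^ J * (‖c‖) ^ (n - J))) := by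
            rw [Finset.sum_const, Finset.card_range]
            push_cast
            ring
    have htend : Filter.Tendsto
        (fun n : ℕ => (((J : ℝ) + 1) * M / (‖c‖) ^ J) *
          ((n : ℝ) ^ J * (‖c‖) ^ n)) Filter.atTop (nhds 0) := by
      have h := tendsto_pow_const_mul_const_pow_of_lt_one J (norm_nonneg c) habs'
      simpa using h.const_mul (((J : ℝ) + 1) * M / (‖c‖) ^ J)
    have hev : ∀ᶠ n : ℕ in Filter.atTop, (((J : ℝ) + 1) * M / (‖c‖) ^ J) *
        ((n : ℝ) ^ J * (‖c‖) ^ n) < r := htend.eventually (gt_mem_nhds hr)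
    obtain ⟨N, hN⟩ := Filter.eventually_atTop.mp hev
    refine ⟨max N J, fun k hk => ?_⟩
    set n : ℕ := k + 1 with hn
    have hnJ : J ≤ n := by
      have := le_max_right N J
      omega
    have hnN : N ≤ n := by
      have := le_max_left N J
      omega
    have hDlt : ((J : ℝ) + 1) * (M * ((n : ℝ) ^ J * (‖c‖) ^ (n - J))) < r := by
      have heq : ((J : ℝ) + 1) * (M * ((n : ℝ) ^ J * (‖c‖) ^ (n - J)))
          = (((J : ℝ) + 1) * M / (‖c‖) ^ J) * ((n : ℝ) ^ J * (‖c‖) ^ n) := by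
        rw [pow_sub₀ _ (ne_of_gt hρ0) hnJ]
        field_simp
      rw [heq]
      exact hN n hnN
    refine lt_of_le_of_lt ?_ hDlt
    show wnorm (a ^ (k + 1) - 0) (1 / r) ≤ _
    rw [sub_zero]
    apply Real.sSup_le
    · rintro x ⟨q, ⟨hq1, _⟩, rfl⟩
      show ‖coeff (a ^ n) q‖ ≤ _
      have hcoeq : coeff (a ^ n) q = (A ^ n).coeff q := by
        show ((a ^ n : LeviCivitaField ℂ) : HahnSeries ℚ ℂ).coeff q = _
        rw [SubmonoidClass.coe_pow]
      rw [hcoeq]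
      exact key n hnJ q hq1
    · positivity
end
end

section
/- Let (a_n) and (b_n) be sequences in 𝒞 with a_n →wk a and b_n →wk b. Then a_n + b_n →wk a + b. If moreover both (a_n) and (b_n) are regular, then a_n·b_n →wk a·b. -/
open Pointwise

noncomputable section

open LeviCivitaField

namespace LCFAux
open LeviCivitaField

lemma coeff_add (x y : LeviCivitaField ℂ) (q : ℚ) :
    coeff (x + y) q = coeff x q + coeff y q := rfl

lemma coeff_sub (x y : LeviCivitaField ℂ) (q : ℚ) :
    coeff (x - y) q = coeff x q - coeff y q := by
  show ((x - y : LeviCivitaField ℂ) : HahnSeries ℚ ℂ).coeff q = _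
  rw [show ((x - y : LeviCivitaField ℂ) : HahnSeries ℚ ℂ)
      = (x : HahnSeries ℚ ℂ) - (y : HahnSeries ℚ ℂ) by push_cast; ring]
  rfl

lemma supp_sub_subset (x y : LeviCivitaField ℂ) : supp (x - y) ⊆ supp x ∪ supp y := by
  intro q hq
  rw [Set.mem_union]
  by_contra h
  push_neg at h
  have h1 : coeff x q = 0 := by
    by_contra h1; exact h.1 h1
  have h2 : coeff y q = 0 := by
    by_contra h2; exact h.2 h2
  have : coeff (x - y) q ≠ 0 := hq
  rw [coeff_sub, h1, h2, sub_zero] at this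
  exact this rfl

lemma finite_S (x : LeviCivitaField ℂ) (r : ℝ) :
    {q : ℚ | (q : ℝ) ≤ r ∧ coeff x q ≠ 0}.Finite := by
  obtain ⟨q0, hq0⟩ := exists_rat_gt r
  refine (x.2 q0).subset ?_
  rintro q ⟨hqr, hq⟩
  exact ⟨hq, by exact_mod_cast lt_of_le_of_lt hqr hq0⟩

lemma wnorm_nonneg (x : LeviCivitaField ℂ) (r : ℝ) : 0 ≤ wnorm x r :=
  Real.sSup_nonneg (by rintro v ⟨q, _, rfl⟩; exact norm_nonneg _)

lemma norm_coeff_le (x : LeviCivitaField ℂ) {r : ℝ} {q : ℚ} (hq : (q : ℝ) ≤ r) :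
    ‖coeff x q‖ ≤ wnorm x r := by
  by_cases h : coeff x q = 0
  · rw [h, norm_zero]; exact wnorm_nonneg x r
  · exact le_csSup (((finite_S x r).image _).bddAbove) ⟨q, ⟨hq, h⟩, rfl⟩

lemma wnorm_le (x : LeviCivitaField ℂ) {r c : ℝ} (hc : 0 ≤ c)
    (h : ∀ q : ℚ, (q : ℝ) ≤ r → ‖coeff x q‖ ≤ c) : wnorm x r ≤ c :=
  Real.sSup_le (by rintro v ⟨q, ⟨hq, _⟩, rfl⟩; exact h q hq) hc

lemma wnorm_mono (x : LeviCivitaField ℂ) {r r' : ℝ} (h : r ≤ r') :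
    wnorm x r ≤ wnorm x r' :=
  wnorm_le x (wnorm_nonneg x r') fun q hq => norm_coeff_le x (hq.trans h)

lemma wnorm_add_le (x y : LeviCivitaField ℂ) (r : ℝ) :
    wnorm (x + y) r ≤ wnorm x r + wnorm y r := by
  refine wnorm_le _ (add_nonneg (wnorm_nonneg x r) (wnorm_nonneg y r)) fun q hq => ?_
  rw [coeff_add]
  exact (norm_add_le _ _).trans (add_le_add (norm_coeff_le x hq) (norm_coeff_le y hq))

lemma wnorm_mul_le (x y : LeviCivitaField ℂ) {A B : Set ℚ}
    (hxA : supp x ⊆ A) (hyB : supp y ⊆ B) {m : ℚ}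
    (hmA : ∀ s ∈ A, m ≤ s) (hmB : ∀ s ∈ B, m ≤ s) {r : ℝ}
    (hfin : {s ∈ A | (s : ℝ) ≤ r - m}.Finite) {N : ℕ} (hN : hfin.toFinset.card ≤ N) :
    wnorm (x * y) r ≤ N * (wnorm x (r - m) * wnorm y (r - m)) := by
  have hw : 0 ≤ wnorm x (r - m) * wnorm y (r - m) :=
    mul_nonneg (wnorm_nonneg _ _) (wnorm_nonneg _ _)
  refine wnorm_le _ (mul_nonneg (Nat.cast_nonneg N) hw) fun q hq => ?_
  have hcoe : coeff (x * y) q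
      = ((x : HahnSeries ℚ ℂ) * (y : HahnSeries ℚ ℂ)).coeff q := rfl
  rw [hcoe, HahnSeries.coeff_mul]
  set F := Finset.addAntidiagonal (x : HahnSeries ℚ ℂ).isPWO_support
    (y : HahnSeries ℚ ℂ).isPWO_support q with hF
  have hmem : ∀ p ∈ F, p.1 ∈ supp x ∧ p.2 ∈ supp y ∧ p.1 + p.2 = q := by
    intro p hp
    rw [hF, Finset.addAntidiagonal, Finset.mem_antidiagonal] at hp
    exact hp
  have hterm : ∀ p ∈ F,
      ‖(x : HahnSeries ℚ ℂ).coeff p.1 * (y : HahnSeries ℚ ℂ).coeff p.2‖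
        ≤ wnorm x (r - m) * wnorm y (r - m) := by
    intro p hp
    obtain ⟨h1, h2, h3⟩ := hmem p hp
    have hp1 : (p.1 : ℝ) ≤ r - m := by
      have : m ≤ p.2 := hmB _ (hyB h2)
      have : p.1 ≤ q - m := by linarith [h3.ge, h3.le, this]
      calc (p.1 : ℝ) ≤ (q : ℝ) - (m : ℝ) := by exact_mod_cast this
        _ ≤ r - m := by linarith
    have hp2 : (p.2 : ℝ) ≤ r - m := by
      have : m ≤ p.1 := hmA _ (hxA h1)
      have : p.2 ≤ q - m := by linarith [h3.le, this]
      calc (p.2 : ℝ) ≤ (q : ℝ) - (m : ℝ) := by exact_mod_cast this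
        _ ≤ r - m := by linarith
    rw [norm_mul]
    exact mul_le_mul (norm_coeff_le x hp1) (norm_coeff_le y hp2) (norm_nonneg _)
      (wnorm_nonneg _ _)
  have hcard : F.card ≤ N := by
    refine le_trans (Finset.card_le_card_of_injOn Prod.fst ?_ ?_) hN
    · intro p hp
      obtain ⟨h1, h2, h3⟩ := hmem p hp
      rw [Finset.mem_coe, Set.Finite.mem_toFinset]
      have hm2 : m ≤ p.2 := hmB _ (hyB h2)
      have : p.1 ≤ q - m := by linarith [h3.le]
      exact ⟨hxA h1, by
        calc (p.1 : ℝ) ≤ (q : ℝ) - (m : ℝ) := by exact_mod_cast this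
          _ ≤ r - m := by linarith⟩
    · intro p hp p' hp' hpp
      obtain ⟨_, _, h3⟩ := hmem p hp
      obtain ⟨_, _, h3'⟩ := hmem p' hp'
      have : p.2 = p'.2 := by
        have := h3.trans h3'.symm
        rw [hpp] at this
        exact add_right_injective _ this
      exact Prod.ext hpp this
  calc ‖∑ p ∈ F, (x : HahnSeries ℚ ℂ).coeff p.1 * (y : HahnSeries ℚ ℂ).coeff p.2‖
      ≤ ∑ p ∈ F, ‖(x : HahnSeries ℚ ℂ).coeff p.1 * (y : HahnSeries ℚ ℂ).coeff p.2‖ :=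
        norm_sum_le _ _
    _ ≤ F.card • (wnorm x (r - m) * wnorm y (r - m)) := Finset.sum_le_card_nsmul _ _ _ hterm
    _ = (F.card : ℝ) * (wnorm x (r - m) * wnorm y (r - m)) := nsmul_eq_mul _ _
    _ ≤ N * (wnorm x (r - m) * wnorm y (r - m)) := by
        exact mul_le_mul_of_nonneg_right (by exact_mod_cast hcard) hw

end LCFAux

open LCFAux

/-- weak convergence is continuous with respect to addition, and with
respect to multiplication for regular sequences. -/
theorem weakTendsto_add_mul (a b : ℕ → LeviCivitaField ℂ) (la lb : LeviCivitaField ℂ)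
    (ha : WeakTendsto a la) (hb : WeakTendsto b lb) :
    WeakTendsto (fun n => a n + b n) (la + lb) ∧
      (Regular a → Regular b → WeakTendsto (fun n => a n * b n) (la * lb)) := by
  constructor
  · intro r hr
    obtain ⟨Na, hNa⟩ := ha (r / 2) (by linarith)
    obtain ⟨Nb, hNb⟩ := hb (r / 2) (by linarith)
    refine ⟨max Na Nb, fun n hn => ?_⟩
    have hna := hNa n (lt_of_le_of_lt (le_max_left _ _) hn)
    have hnb := hNb n (lt_of_le_of_lt (le_max_right _ _) hn)
    have hmono : (1 : ℝ) / r ≤ 1 / (r / 2) :=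
      one_div_le_one_div_of_le (by linarith) (by linarith)
    have key : (a n + b n) - (la + lb) = (a n - la) + (b n - lb) := by ring
    calc wnorm ((fun n => a n + b n) n - (la + lb)) (1 / r)
        = wnorm ((a n - la) + (b n - lb)) (1 / r) := by simp only []; rw [key]
      _ ≤ wnorm (a n - la) (1 / r) + wnorm (b n - lb) (1 / r) := wnorm_add_le _ _ _
      _ ≤ wnorm (a n - la) (1 / (r / 2)) + wnorm (b n - lb) (1 / (r / 2)) :=
          add_le_add (wnorm_mono _ hmono) (wnorm_mono _ hmono)
      _ < r / 2 + r / 2 := add_lt_add hna hnb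
      _ = r := by ring
  · intro hra hrb r hr
    set A : Set ℚ := (⋃ n, supp (a n)) ∪ supp la with hA
    set B : Set ℚ := (⋃ n, supp (b n)) ∪ supp lb with hB
    have hAlf : LeftFinite A := LeftFinite.union hra la.2
    have hBlf : LeftFinite B := LeftFinite.union hrb lb.2
    obtain ⟨mA, hmA⟩ := hAlf.exists_lb
    obtain ⟨mB, hmB⟩ := hBlf.exists_lb
    set m : ℚ := min (min mA mB) 0 with hm
    have hm0 : m ≤ 0 := min_le_right _ _
    have hmA' : ∀ s ∈ A, m ≤ s := fun s hs =>
      le_trans (le_trans (min_le_left _ _) (min_le_left _ _)) (hmA s hs)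
    have hmB' : ∀ s ∈ B, m ≤ s := fun s hs =>
      le_trans (le_trans (min_le_left _ _) (min_le_right _ _)) (hmB s hs)
    set r1 : ℝ := 1 / r - (m : ℝ) with hr1def
    have hfinA : {s ∈ A | (s : ℝ) ≤ r1}.Finite := by
      obtain ⟨q0, hq0⟩ := exists_rat_gt r1
      refine (hAlf q0).subset ?_
      rintro s ⟨hs, h⟩
      exact ⟨hs, by exact_mod_cast lt_of_le_of_lt h hq0⟩
    set N : ℕ := hfinA.toFinset.card + 1 with hNdef
    have hNcard : hfinA.toFinset.card ≤ N := Nat.le_succ _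
    have hsan : ∀ n, supp (a n) ⊆ A := fun n =>
      (Set.subset_iUnion (fun n => supp (a n)) n).trans Set.subset_union_left
    have hsla : supp la ⊆ A := Set.subset_union_right
    have hsbn : ∀ n, supp (b n) ⊆ B := fun n =>
      (Set.subset_iUnion (fun n => supp (b n)) n).trans Set.subset_union_left
    have hslb : supp lb ⊆ B := Set.subset_union_right
    have hdA : ∀ n, supp (a n - la) ⊆ A := fun n =>
      (supp_sub_subset _ _).trans (Set.union_subset (hsan n) hsla)
    have hdB : ∀ n, supp (b n - lb) ⊆ B := fun n =>
      (supp_sub_subset _ _).trans (Set.union_subset (hsbn n) hslb)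
    set C : ℝ := wnorm la r1 + wnorm lb r1 with hCdef
    have hC : 0 ≤ C := add_nonneg (wnorm_nonneg _ _) (wnorm_nonneg _ _)
    set Nr : ℝ := (N : ℝ) with hNr
    have hNr1 : (1 : ℝ) ≤ Nr := by
      rw [hNr, hNdef]; exact_mod_cast Nat.succ_le_succ (Nat.zero_le _)
    have hNr0 : (0 : ℝ) < Nr := lt_of_lt_of_le one_pos hNr1
    have hD : (0 : ℝ) < max r1 1 := lt_of_lt_of_le one_pos (le_max_right _ _)
    set ε : ℝ := min 1 (min (r / (2 * Nr * (C + 2))) (1 / max r1 1)) with hεdef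
    have hε0 : 0 < ε := by
      refine lt_min one_pos (lt_min ?_ ?_)
      · exact div_pos hr (mul_pos (mul_pos two_pos hNr0) (by linarith))
      · exact div_pos one_pos hD
    have hε1 : ε ≤ 1 := min_le_left _ _
    have hε2 : ε ≤ r / (2 * Nr * (C + 2)) := le_trans (min_le_right _ _) (min_le_left _ _)
    have hε3 : r1 ≤ 1 / ε := by
      have h1 : ε ≤ 1 / max r1 1 := le_trans (min_le_right _ _) (min_le_right _ _)
      have := one_div_le_one_div_of_le hε0 h1
      rw [one_div_one_div] at this
      exact le_trans (le_max_left r1 1) this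
    obtain ⟨Na, hNa⟩ := ha ε hε0
    obtain ⟨Nb, hNb⟩ := hb ε hε0
    refine ⟨max Na Nb, fun n hn => ?_⟩
    have hwa : wnorm (a n - la) r1 < ε :=
      lt_of_le_of_lt (wnorm_mono _ hε3) (hNa n (lt_of_le_of_lt (le_max_left _ _) hn))
    have hwb : wnorm (b n - lb) r1 < ε :=
      lt_of_le_of_lt (wnorm_mono _ hε3) (hNb n (lt_of_le_of_lt (le_max_right _ _) hn))
    have hwbn : wnorm (b n) r1 ≤ 1 + C := by
      have : b n = (b n - lb) + lb := by ring
      calc wnorm (b n) r1 = wnorm ((b n - lb) + lb) r1 := by rw [← this]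
        _ ≤ wnorm (b n - lb) r1 + wnorm lb r1 := wnorm_add_le _ _ _
        _ ≤ 1 + C := by
            have h1 : wnorm (b n - lb) r1 ≤ 1 := le_trans hwb.le hε1
            have h2 : wnorm lb r1 ≤ C := by
              rw [hCdef]; linarith [wnorm_nonneg la r1]
            linarith
    have hla : wnorm la r1 ≤ C := by rw [hCdef]; linarith [wnorm_nonneg lb r1]
    have hr1eq : 1 / r - (m : ℝ) = r1 := rfl
    have hmul1 : wnorm ((a n - la) * b n) (1 / r)
        ≤ Nr * (wnorm (a n - la) r1 * wnorm (b n) r1) := by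
      have := wnorm_mul_le (a n - la) (b n) (hdA n) (hsbn n) hmA' hmB'
        (by rw [hr1eq]; exact hfinA) hNcard
      rwa [hr1eq] at this
    have hmul2 : wnorm (la * (b n - lb)) (1 / r)
        ≤ Nr * (wnorm la r1 * wnorm (b n - lb) r1) := by
      have := wnorm_mul_le la (b n - lb) hsla (hdB n) hmA' hmB'
        (by rw [hr1eq]; exact hfinA) hNcard
      rwa [hr1eq] at this
    have key : (a n) * (b n) - la * lb = (a n - la) * b n + la * (b n - lb) := by ring
    have hchain : wnorm ((fun n => a n * b n) n - la * lb) (1 / r)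
        ≤ Nr * ε * (2 * C + 1) := by
      calc wnorm ((fun n => a n * b n) n - la * lb) (1 / r)
          = wnorm ((a n - la) * b n + la * (b n - lb)) (1 / r) := by
            simp only []; rw [key]
        _ ≤ wnorm ((a n - la) * b n) (1 / r) + wnorm (la * (b n - lb)) (1 / r) :=
            wnorm_add_le _ _ _
        _ ≤ Nr * (wnorm (a n - la) r1 * wnorm (b n) r1)
              + Nr * (wnorm la r1 * wnorm (b n - lb) r1) := add_le_add hmul1 hmul2
        _ ≤ Nr * (ε * (1 + C)) + Nr * (C * ε) := by
            refine add_le_add ?_ ?_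
            · refine mul_le_mul_of_nonneg_left ?_ hNr0.le
              exact mul_le_mul hwa.le hwbn (wnorm_nonneg _ _) (by linarith)
            · refine mul_le_mul_of_nonneg_left ?_ hNr0.le
              exact mul_le_mul hla hwb.le (wnorm_nonneg _ _) hC
        _ = Nr * ε * (2 * C + 1) := by ring
    clear_value A B m r1 N C Nr ε
    have hNε : Nr * ε ≤ r / (2 * (C + 2)) := by
      have hne : Nr ≠ 0 := ne_of_gt hNr0
      have h2 : Nr * (r / (2 * Nr * (C + 2))) = r / (2 * (C + 2)) := by
        rw [show (2 : ℝ) * Nr * (C + 2) = Nr * (2 * (C + 2)) from by ring,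
          ← mul_div_assoc, mul_div_mul_left _ _ hne]
      calc Nr * ε ≤ Nr * (r / (2 * Nr * (C + 2))) := mul_le_mul_of_nonneg_left hε2 hNr0.le
        _ = r / (2 * (C + 2)) := h2
    have hfinal : Nr * ε * (2 * C + 1) < r := by
      have h1 : Nr * ε * (2 * C + 1) ≤ r / (2 * (C + 2)) * (2 * C + 1) := by
        refine mul_le_mul_of_nonneg_right hNε (by linarith)
      have h2 : r / (2 * (C + 2)) * (2 * C + 1) < r := by
        have hd : (0 : ℝ) < 2 * (C + 2) := by linarith
        have hrd : 0 < r / (2 * (C + 2)) := div_pos hr hd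
        have hlt : (2 * C + 1 : ℝ) < 2 * (C + 2) := by linarith
        calc r / (2 * (C + 2)) * (2 * C + 1)
            < r / (2 * (C + 2)) * (2 * (C + 2)) := mul_lt_mul_of_pos_left hlt hrd
          _ = r := div_mul_cancel₀ r (ne_of_gt hd)
      linarith
    exact lt_of_le_of_lt hchain hfinal
end
end

section
/- Fix a positive rational number p, an integer n ≥ 0, and positive integers m ≤ ℓ (so that the rational number r = m/ℓ satisfies 0 < r ≤ 1). Let (P_k) be a sequence in ℛ and P ∈ ℛ such that supp(P_k) ⊆ {i/p : i = 0, 1, …, n} for all k, supp(P) ⊆ {i/p : i = 0, 1, …, n}, P_k ≻ 0 for all k, P ≻ 0, P[0] ≠ 0, and P_k →wk P. Suppose Q_k ∈ ℛ satisfy Q_k ⪰ 0 and Q_k^ℓ = P_k^m for all k, and Q ∈ ℛ satisfies Q ⪰ 0 and Q^ℓ = P^m. Then Q_k →wk Q (i.e. P_k^r →wk P^r). -/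
open Pointwise

noncomputable section

open LeviCivitaField

section Aux

open LeviCivitaField Filter Topology

local notation "ℛ" => LeviCivitaField ℝ

theorem lcf_coeff_sub (x y : ℛ) (q : ℚ) : coeff (x - y) q = coeff x q - coeff y q := by
  show ((x - y : ℛ) : HahnSeries ℚ ℝ).coeff q = _
  push_cast
  simp [HahnSeries.coeff_sub, coeff]

theorem lcf_wnorm_lt {x : ℛ} {r R : ℝ} (hr : 0 < r)
    (h : ∀ q : ℚ, (q : ℝ) ≤ R → |coeff x q| < r) : wnorm x R < r := by
  obtain ⟨r', hr'⟩ := exists_rat_gt R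
  have hfin : {q : ℚ | (q : ℝ) ≤ R ∧ coeff x q ≠ 0}.Finite := by
    apply (x.2 r').subset
    rintro q ⟨hq1, hq2⟩
    exact ⟨hq2, by exact_mod_cast lt_of_le_of_lt hq1 hr'⟩
  have hfin' := hfin.image (fun q : ℚ => ‖coeff x q‖)
  rcases Set.eq_empty_or_nonempty ((fun q : ℚ => ‖coeff x q‖) '' {q : ℚ | (q : ℝ) ≤ R ∧ coeff x q ≠ 0}) with he | hne
  · rw [wnorm, he, Real.sSup_empty]; exact hr
  · have := hne.csSup_mem hfin'
    rw [wnorm]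
    obtain ⟨q, hq, hqe⟩ := this
    rw [← hqe]
    simpa [Real.norm_eq_abs] using h q hq.1

theorem lcf_le_wnorm {x : ℛ} {q : ℚ} {R : ℝ} (hq : (q : ℝ) ≤ R) (h0 : coeff x q ≠ 0) :
    |coeff x q| ≤ wnorm x R := by
  obtain ⟨r', hr'⟩ := exists_rat_gt R
  have hfin : {q : ℚ | (q : ℝ) ≤ R ∧ coeff x q ≠ 0}.Finite := by
    apply (x.2 r').subset
    rintro q ⟨hq1, hq2⟩
    exact ⟨hq2, by exact_mod_cast lt_of_le_of_lt hq1 hr'⟩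
  rw [← Real.norm_eq_abs, wnorm]
  exact le_csSup ((hfin.image _).bddAbove) ⟨q, ⟨hq, h0⟩, rfl⟩

theorem lcf_coeff_tendsto {P : ℕ → ℛ} {L : ℛ} (h : WeakTendsto P L) (q : ℚ) :
    Tendsto (fun k => coeff (P k) q) atTop (𝓝 (coeff L q)) := by
  rw [Metric.tendsto_atTop]
  intro ε hε
  set M : ℝ := max (q : ℝ) 1 with hM
  have hM0 : 0 < M := lt_of_lt_of_le one_pos (le_max_right _ _)
  set r : ℝ := min ε (1 / M) with hrdef
  have hr0 : 0 < r := lt_min hε (by positivity)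
  have hqr : (q : ℝ) ≤ 1 / r := by
    have h1 : r ≤ 1 / M := min_le_right _ _
    have h2 : 1 / (1 / M) ≤ 1 / r := one_div_le_one_div_of_le hr0 h1
    rw [one_div_one_div] at h2
    exact le_trans (le_max_left _ _) h2
  obtain ⟨N, hN⟩ := h r hr0
  refine ⟨N + 1, fun k hk => ?_⟩
  have hw := hN k (by omega)
  have hle : |coeff (P k - L) q| < r := by
    by_cases h0 : coeff (P k - L) q = 0
    · rw [h0]; simpa using hr0
    · exact lt_of_le_of_lt (lcf_le_wnorm hqr h0) hw
  rw [Real.dist_eq]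
  calc |coeff (P k) q - coeff L q| = |coeff (P k - L) q| := by rw [lcf_coeff_sub]
    _ < r := hle
    _ ≤ ε := min_le_left _ _

theorem lcf_weakTendsto_of_coeff_tendsto {P : ℕ → ℛ} {L : ℛ} {S : Set ℚ} (hS : LeftFinite S)
    (hsupp : ∀ k, supp (P k - L) ⊆ S)
    (h : ∀ q : ℚ, Tendsto (fun k => coeff (P k) q) atTop (𝓝 (coeff L q))) :
    WeakTendsto P L := by
  intro r hr
  obtain ⟨r', hr'⟩ := exists_rat_gt (1 / r)
  have hF : {q ∈ S | q < r'}.Finite := hS r'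
  have hev : ∀ᶠ k in atTop, ∀ q ∈ hF.toFinset, |coeff (P k) q - coeff L q| < r := by
    rw [Filter.eventually_all_finset]
    intro q _
    have := (h q).sub_const (coeff L q)
    rw [show (coeff L q - coeff L q) = 0 by ring] at this
    have h2 := (Metric.tendsto_atTop.mp this) r hr
    obtain ⟨N, hN⟩ := h2
    rw [eventually_atTop]
    exact ⟨N, fun k hk => by simpa [Real.dist_eq] using hN k hk⟩
  rw [eventually_atTop] at hev
  obtain ⟨N, hN⟩ := hev
  refine ⟨N, fun k hk => ?_⟩
  apply lcf_wnorm_lt hr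
  intro q hq
  by_cases h0 : coeff (P k - L) q = 0
  · rw [lcf_coeff_sub] at h0 ⊢
    rw [h0]; simpa using hr
  · have hqS : q ∈ S := hsupp k h0
    have hqF : q ∈ hF.toFinset := by
      rw [Set.Finite.mem_toFinset]
      exact ⟨hqS, by exact_mod_cast lt_of_le_of_lt hq hr'⟩
    rw [lcf_coeff_sub]
    exact hN k (le_of_lt hk) q hqF

end Aux
section PartB

open Filter Topology

/-- leading coefficient of a power -/
theorem hahn_leadingCoeff_pow (x : HahnSeries ℚ ℝ) (t : ℕ) :
    (x ^ t).leadingCoeff = x.leadingCoeff ^ t := by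
  induction t with
  | zero => simp [HahnSeries.leadingCoeff_eq, HahnSeries.order_one]
  | succ t ih =>
    rcases eq_or_ne x 0 with rfl | hx
    · simp [HahnSeries.leadingCoeff_eq, zero_pow (Nat.succ_ne_zero t)]
    rw [pow_succ, pow_succ, ← ih, HahnSeries.leadingCoeff_eq,
      HahnSeries.order_mul (pow_ne_zero _ hx) hx, HahnSeries.coeff_mul_order_add_order,
      HahnSeries.leadingCoeff_eq, HahnSeries.leadingCoeff_eq]

theorem hahn_support_pow_bound {x : HahnSeries ℚ ℝ} {a : ℚ}
    (hx : ∀ q ∈ x.support, a ≤ q) (t : ℕ) :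
    ∀ q ∈ (x ^ t).support, (t : ℚ) * a ≤ q := by
  induction t with
  | zero =>
    intro q hq
    rw [pow_zero] at hq
    have : q = 0 := by
      by_contra hq0
      exact hq (by rw [HahnSeries.coeff_one, if_neg hq0])
    rw [this]
    norm_num
  | succ t ih =>
    intro q hq
    rw [pow_succ] at hq
    obtain ⟨u, hu, v, hv, rfl⟩ := HahnSeries.support_mul_subset hq
    have h1 := ih u hu
    have h2 := hx v hv
    push_cast
    linarith

theorem hahn_support_pow_grid {x : HahnSeries ℚ ℝ} {c : ℚ}
    (hx : ∀ q ∈ x.support, ∃ i : ℕ, q = (i : ℚ) * c) (t : ℕ) :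
    ∀ q ∈ (x ^ t).support, ∃ i : ℕ, q = (i : ℚ) * c := by
  induction t with
  | zero =>
    intro q hq
    rw [pow_zero] at hq
    have : q = 0 := by
      by_contra hq0
      exact hq (by rw [HahnSeries.coeff_one, if_neg hq0])
    exact ⟨0, by simp [this]⟩
  | succ t ih =>
    intro q hq
    rw [pow_succ] at hq
    obtain ⟨u, hu, v, hv, rfl⟩ := HahnSeries.support_mul_subset hq
    obtain ⟨i, rfl⟩ := ih u hu
    obtain ⟨i', rfl⟩ := hx v hv
    exact ⟨i + i', by push_cast; ring⟩

theorem hahn_support_pow_gridZ {x : HahnSeries ℚ ℝ} {c : ℚ}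
    (hx : ∀ q ∈ x.support, ∃ z : ℤ, q = (z : ℚ) * c) (t : ℕ) :
    ∀ q ∈ (x ^ t).support, ∃ z : ℤ, q = (z : ℚ) * c := by
  induction t with
  | zero =>
    intro q hq
    rw [pow_zero] at hq
    have : q = 0 := by
      by_contra hq0
      exact hq (by rw [HahnSeries.coeff_one, if_neg hq0])
    exact ⟨0, by simp [this]⟩
  | succ t ih =>
    intro q hq
    rw [pow_succ] at hq
    obtain ⟨u, hu, v, hv, rfl⟩ := HahnSeries.support_mul_subset hq
    obtain ⟨i, rfl⟩ := ih u hu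
    obtain ⟨i', rfl⟩ := hx v hv
    exact ⟨i + i', by push_cast; ring⟩

/-- Main support lemma: if `Q ^ ℓ` is supported on the grid `(ℓ*c)·ℤ`,
then `Q` is supported on `c·ℤ`. -/
theorem hahn_root_support {Q : HahnSeries ℚ ℝ} {c : ℚ} (hc : 0 < c) {ℓ : ℕ} (hℓ : 0 < ℓ)
    (hQ0 : Q ≠ 0)
    (hW : ∀ q ∈ (Q ^ ℓ).support, ∃ z : ℤ, q = (z : ℚ) * ((ℓ : ℚ) * c)) :
    ∀ q ∈ Q.support, ∃ z : ℤ, q = (z : ℚ) * c := by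
  set InH : ℚ → Prop := fun q => ∃ z : ℤ, q = (z : ℚ) * c with hInH
  set lam : ℚ := Q.order with hlam
  have hW0 : Q ^ ℓ ≠ 0 := pow_ne_zero _ hQ0
  have horder : (Q ^ ℓ).order = (ℓ : ℚ) * lam := by
    rw [HahnSeries.order_pow]
    simp [hlam, nsmul_eq_mul]
  have hlamH : InH lam := by
    obtain ⟨z, hz⟩ := hW _ ((HahnSeries.coeff_order_eq_zero.not.mpr hW0))
    rw [horder] at hz
    refine ⟨z, ?_⟩
    have hℓQ : (ℓ : ℚ) ≠ 0 := Nat.cast_ne_zero.mpr hℓ.ne'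
    have h2 : (ℓ : ℚ) * lam = (ℓ : ℚ) * ((z : ℚ) * c) := by rw [hz]; ring
    exact mul_left_cancel₀ hℓQ h2
  -- suppose not
  by_contra hbad
  push_neg at hbad
  obtain ⟨q0, hq0supp, hq0H⟩ := hbad
  set Bad : Set ℚ := {q | q ∈ Q.support ∧ ¬ InH q} with hBad
  have hBadne : Bad.Nonempty := ⟨q0, hq0supp, fun ⟨z, hz⟩ => hq0H z hz⟩
  have hBadWF : Bad.IsWF := Q.isWF_support.subset (fun q hq => hq.1)
  set s : ℚ := hBadWF.min hBadne with hs
  have hsBad : s ∈ Bad := hBadWF.min_mem hBadne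
  have hsH : ¬ InH s := hsBad.2
  -- split Q = A + B
  classical
  set A : HahnSeries ℚ ℝ :=
    ⟨fun q => if InH q then Q.coeff q else 0,
      Q.isPWO_support.mono (fun q hq => by
        simp only [Function.mem_support] at hq ⊢
        intro h; apply hq; split <;> simp [h])⟩ with hA
  set B : HahnSeries ℚ ℝ := Q - A with hB
  have hAcoeff : ∀ q, A.coeff q = if InH q then Q.coeff q else 0 := fun q => rfl
  have hBcoeff : ∀ q, B.coeff q = if InH q then 0 else Q.coeff q := by
    intro q
    rw [hB, HahnSeries.coeff_sub, hAcoeff]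
    split <;> ring
  have hQAB : Q = A + B := by rw [hB]; ring
  have hAlam : A.coeff lam = Q.coeff lam := by rw [hAcoeff, if_pos hlamH]
  have hQlam : Q.coeff lam ≠ 0 := (HahnSeries.coeff_order_eq_zero.not.mpr hQ0)
  have hA0 : A ≠ 0 := HahnSeries.ne_zero_of_coeff_ne_zero (by rw [hAlam]; exact hQlam)
  have hsuppA : A.support ⊆ Q.support := fun q hq => by
    simp only [HahnSeries.mem_support, hAcoeff] at hq ⊢
    intro h; apply hq; split <;> simp [h]
  have hsuppAH : ∀ q ∈ A.support, InH q := by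
    intro q hq
    by_contra h
    exact hq (by rw [hAcoeff, if_neg h])
  have hsuppB : B.support = Bad := by
    ext q
    simp only [HahnSeries.mem_support, hBcoeff, hBad, Set.mem_setOf_eq, HahnSeries.mem_support]
    constructor
    · intro h
      by_cases hH : InH q
      · rw [if_pos hH] at h; exact absurd rfl h
      · rw [if_neg hH] at h; exact ⟨h, hH⟩
    · rintro ⟨h1, h2⟩
      rw [if_neg h2]; exact h1
  have hB0 : B ≠ 0 := by
    apply HahnSeries.ne_zero_of_coeff_ne_zero (g := s)
    rw [hBcoeff, if_neg hsH]
    exact hsBad.1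
  -- orders
  have hAorder : A.order = lam := by
    apply le_antisymm
    · exact HahnSeries.order_le_of_coeff_ne_zero (by rw [hAlam]; exact hQlam)
    · have h1 : A.coeff A.order ≠ 0 := (HahnSeries.coeff_order_eq_zero.not.mpr hA0)
      have h2 : Q.coeff A.order ≠ 0 := hsuppA h1
      exact HahnSeries.order_le_of_coeff_ne_zero h2
  have hBorder : B.order = s := by
    apply le_antisymm
    · apply HahnSeries.order_le_of_coeff_ne_zero
      rw [hBcoeff, if_neg hsH]; exact hsBad.1
    · have h1 : B.order ∈ B.support := (HahnSeries.coeff_order_eq_zero.not.mpr hB0)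
      rw [hsuppB] at h1
      exact hBadWF.min_le hBadne h1
  have hslam : lam < s := by
    have h1 : lam ≤ s := HahnSeries.order_le_of_coeff_ne_zero hsBad.1
    rcases lt_or_eq_of_le h1 with h | h
    · exact h
    · exact absurd (h ▸ hlamH) hsH
  -- the critical exponent
  set qstar : ℚ := ((ℓ : ℚ) - 1) * lam + s with hqstar
  have hqstarH : ¬ InH qstar := by
    rintro ⟨z, hz⟩
    obtain ⟨zl, hzl⟩ := hlamH
    apply hsH
    refine ⟨z - ((ℓ : ℤ) - 1) * zl, ?_⟩
    have hseq : s = (z : ℚ) * c - ((ℓ : ℚ) - 1) * lam := by rw [← hz, hqstar]; ring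
    rw [hseq, hzl]
    push_cast
    ring
  -- coefficient of Q ^ ℓ at qstar
  have hmain : (Q ^ ℓ).coeff qstar =
      (ℓ : ℝ) * (A.leadingCoeff ^ (ℓ - 1) * B.leadingCoeff) := by
    rw [hQAB, add_pow]
    rw [show ((Finset.range (ℓ + 1)).sum
          (fun k => A ^ k * B ^ (ℓ - k) * (ℓ.choose k : HahnSeries ℚ ℝ))).coeff qstar
        = (Finset.range (ℓ + 1)).sum
          (fun k => (A ^ k * B ^ (ℓ - k) * (ℓ.choose k : HahnSeries ℚ ℝ)).coeff qstar) from
      map_sum (HahnSeries.coeff.addMonoidHom qstar) _ _]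
    rw [Finset.sum_eq_single (ℓ - 1)]
    · have h1 : ℓ - (ℓ - 1) = 1 := by omega
      rw [h1, pow_one]
      have h2 : (A ^ (ℓ - 1) * B).coeff qstar = A.leadingCoeff ^ (ℓ - 1) * B.leadingCoeff := by
        have hcast : ((ℓ - 1 : ℕ) : ℚ) = (ℓ : ℚ) - 1 := by
          push_cast [Nat.cast_sub (hℓ : 1 ≤ ℓ)]
          ring
        have ho : qstar = (A ^ (ℓ - 1)).order + B.order := by
          rw [HahnSeries.order_pow, hAorder, hBorder, hqstar, nsmul_eq_mul, hcast]
        rw [ho, HahnSeries.coeff_mul_order_add_order, hahn_leadingCoeff_pow]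
      calc (A ^ (ℓ - 1) * B * (ℓ.choose (ℓ - 1) : HahnSeries ℚ ℝ)).coeff qstar
          = ((ℓ.choose (ℓ - 1)) • (A ^ (ℓ - 1) * B)).coeff qstar := by
            rw [nsmul_eq_mul, mul_comm]
        _ = (ℓ.choose (ℓ - 1) : ℝ) * (A ^ (ℓ - 1) * B).coeff qstar := by
            rw [show ((ℓ.choose (ℓ - 1)) • (A ^ (ℓ - 1) * B)).coeff qstar
                = (ℓ.choose (ℓ - 1)) • ((A ^ (ℓ - 1) * B).coeff qstar) from
              map_nsmul (HahnSeries.coeff.addMonoidHom qstar) _ _, nsmul_eq_mul]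
        _ = (ℓ : ℝ) * (A.leadingCoeff ^ (ℓ - 1) * B.leadingCoeff) := by
            rw [h2, Nat.choose_symm hℓ, Nat.choose_one_right]
    · intro k hk hkne
      rw [Finset.mem_range] at hk
      have hcoeff0 : (A ^ k * B ^ (ℓ - k)).coeff qstar = 0 := by
        by_cases hkl : k = ℓ
        · -- term A ^ ℓ : supported in H
          subst hkl
          rw [Nat.sub_self, pow_zero, mul_one]
          by_contra h0
          obtain ⟨z, hz⟩ := hahn_support_pow_gridZ hsuppAH k qstar h0
          exact hqstarH ⟨z, hz⟩
        · -- 2 ≤ ℓ - k : order too large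
          have hk2 : 2 ≤ ℓ - k := by omega
          by_contra h0
          have h0' : qstar ∈ (A ^ k * B ^ (ℓ - k)).support := h0
          obtain ⟨u, hu, v, hv, huv⟩ := HahnSeries.support_mul_subset h0'
          have hub : (k : ℚ) * lam ≤ u := by
            apply hahn_support_pow_bound _ k u hu
            intro q hq
            rw [← hAorder]
            exact HahnSeries.order_le_of_coeff_ne_zero hq
          have hvb : ((ℓ - k : ℕ) : ℚ) * s ≤ v := by
            apply hahn_support_pow_bound _ (ℓ - k) v hv
            intro q hq
            rw [← hBorder]
            exact HahnSeries.order_le_of_coeff_ne_zero hq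
          have hcast : ((ℓ - k : ℕ) : ℚ) = (ℓ : ℚ) - k := by
            push_cast [Nat.cast_sub (le_of_lt (by omega : k < ℓ))]
            ring
          rw [hcast] at hvb
          have hlt : qstar < (k : ℚ) * lam + ((ℓ : ℚ) - k) * s := by
            rw [hqstar]
            have hpos : ((ℓ : ℚ) - k - 1) * (s - lam) > 0 := by
              apply mul_pos _ (by linarith)
              have : (k : ℚ) + 2 ≤ (ℓ : ℚ) := by exact_mod_cast (by omega : k + 2 ≤ ℓ)
              linarith
            nlinarith
          have huv' : u + v = qstar := huv
          linarith
      rw [show (A ^ k * B ^ (ℓ - k) * (ℓ.choose k : HahnSeries ℚ ℝ)).coeff qstar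
          = (ℓ.choose k : ℝ) * (A ^ k * B ^ (ℓ - k)).coeff qstar from by
        rw [mul_comm _ (ℓ.choose k : HahnSeries ℚ ℝ), ← nsmul_eq_mul,
          show ((ℓ.choose k) • (A ^ k * B ^ (ℓ - k))).coeff qstar
              = (ℓ.choose k) • ((A ^ k * B ^ (ℓ - k)).coeff qstar) from
            map_nsmul (HahnSeries.coeff.addMonoidHom qstar) _ _,
          nsmul_eq_mul], hcoeff0, mul_zero]
    · intro h
      exact absurd (Finset.mem_range.mpr (by omega)) h
  -- contradiction
  have hne : (Q ^ ℓ).coeff qstar ≠ 0 := by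
    rw [hmain]
    apply mul_ne_zero (Nat.cast_ne_zero.mpr hℓ.ne')
    apply mul_ne_zero (pow_ne_zero _ _)
    · rw [HahnSeries.leadingCoeff_eq, hBorder, hBcoeff, if_neg hsH]
      exact hsBad.1
    · rw [HahnSeries.leadingCoeff_eq, hAorder, hAlam]
      exact hQlam
  obtain ⟨z, hz⟩ := hW qstar hne
  exact hqstarH ⟨z * ℓ, by rw [hz]; push_cast; ring⟩

end PartB
section PartC

open Filter Topology PowerSeries

/-- the scaling embedding `ℕ →+ ℚ`, `j ↦ j * c` -/
def emap (c : ℚ) : ℕ →+ ℚ where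
  toFun := fun j => (j : ℚ) * c
  map_zero' := by simp
  map_add' := fun a b => by push_cast; ring

theorem emap_inj {c : ℚ} (hc : 0 < c) : Function.Injective (emap c) := by
  intro a b hab
  simp only [emap, AddMonoidHom.coe_mk, ZeroHom.coe_mk] at hab
  have := mul_right_cancel₀ hc.ne' hab
  exact_mod_cast this

theorem emap_mono {c : ℚ} (hc : 0 < c) :
    ∀ g g' : ℕ, emap c g ≤ emap c g' ↔ g ≤ g' := by
  intro g g'
  simp only [emap, AddMonoidHom.coe_mk, ZeroHom.coe_mk]
  rw [mul_le_mul_iff_left₀ hc]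
  exact_mod_cast Iff.rfl

/-- the ring embedding of power series into Hahn series over `ℚ`, `X ↦ d^c`. -/
def psEmb (c : ℚ) (hc : 0 < c) : PowerSeries ℝ →+* HahnSeries ℚ ℝ :=
  (HahnSeries.embDomainRingHom (emap c) (emap_inj hc) (emap_mono hc)).comp
    (HahnSeries.toPowerSeries.symm : PowerSeries ℝ ≃+* HahnSeries ℕ ℝ).toRingHom

theorem psEmb_coeff (c : ℚ) (hc : 0 < c) (f : PowerSeries ℝ) (j : ℕ) :
    (psEmb c hc f).coeff ((j : ℚ) * c) = PowerSeries.coeff j f := by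
  have h : (psEmb c hc f).coeff (emap c j)
      = (HahnSeries.toPowerSeries.symm f).coeff j := by
    exact HahnSeries.embDomain_coeff
  simpa [emap, HahnSeries.coeff_toPowerSeries_symm] using h

theorem psEmb_coeff_notin (c : ℚ) (hc : 0 < c) (f : PowerSeries ℝ) (q : ℚ)
    (h : ∀ j : ℕ, q ≠ (j : ℚ) * c) : (psEmb c hc f).coeff q = 0 := by
  apply HahnSeries.embDomain_notin_range
  rintro ⟨j, hj⟩
  exact h j (by simpa [emap] using hj.symm)

theorem psEmb_injective (c : ℚ) (hc : 0 < c) : Function.Injective (psEmb c hc) :=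
  HahnSeries.embDomain_injective.comp HahnSeries.toPowerSeries.symm.injective

/-- power series attached to a grid-supported Hahn series -/
def toPS (c : ℚ) (x : HahnSeries ℚ ℝ) : PowerSeries ℝ :=
  PowerSeries.mk fun j => x.coeff ((j : ℚ) * c)

theorem psEmb_toPS {c : ℚ} (hc : 0 < c) {x : HahnSeries ℚ ℝ}
    (hx : ∀ q ∈ x.support, ∃ j : ℕ, q = (j : ℚ) * c) :
    psEmb c hc (toPS c x) = x := by
  ext q
  by_cases hq : ∃ j : ℕ, q = (j : ℚ) * c
  · obtain ⟨j, rfl⟩ := hq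
    rw [psEmb_coeff, toPS, PowerSeries.coeff_mk]
  · push_neg at hq
    rw [psEmb_coeff_notin c hc _ q hq]
    by_contra h
    obtain ⟨j, hj⟩ := hx q (fun h'' => h h''.symm)
    exact hq j hj
  
theorem toPS_pow {c : ℚ} (hc : 0 < c) {x : HahnSeries ℚ ℝ}
    (hx : ∀ q ∈ x.support, ∃ j : ℕ, q = (j : ℚ) * c) (t : ℕ) :
    toPS c (x ^ t) = (toPS c x) ^ t := by
  apply psEmb_injective c hc
  rw [map_pow, psEmb_toPS hc hx, psEmb_toPS hc (hahn_support_pow_grid hx t)]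

/-- The key recursion: coefficient `j` of `q ^ ℓ` in terms of the truncation of `q`. -/
theorem ps_coeff_pow_recursion (q : PowerSeries ℝ) {j ℓ : ℕ} (hj : 0 < j) (hℓ : 0 < ℓ) :
    PowerSeries.coeff j (q ^ ℓ) =
      PowerSeries.coeff j ((PowerSeries.mk fun i => if i < j then PowerSeries.coeff i q else 0) ^ ℓ)
      + (ℓ : ℝ) * (PowerSeries.constantCoeff q) ^ (ℓ - 1) * PowerSeries.coeff j q := by
  classical
  set A : PowerSeries ℝ := PowerSeries.mk fun i => if i < j then PowerSeries.coeff i q else 0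
    with hA
  set B : PowerSeries ℝ := q - A with hB
  have hBlow : ∀ i, i < j → PowerSeries.coeff i B = 0 := by
    intro i hi
    rw [hB, map_sub, hA, PowerSeries.coeff_mk, if_pos hi, sub_self]
  obtain ⟨B', hB'⟩ : (PowerSeries.X : PowerSeries ℝ) ^ j ∣ B :=
    PowerSeries.X_pow_dvd_iff.mpr (fun i hi => hBlow i hi)
  have hcoeffjB : PowerSeries.coeff j B = PowerSeries.constantCoeff B' := by
    rw [hB', ← PowerSeries.coeff_zero_eq_constantCoeff]
    simpa using PowerSeries.coeff_X_pow_mul B' j 0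
  have hcoeffjBq : PowerSeries.coeff j B = PowerSeries.coeff j q := by
    rw [hB, map_sub, hA, PowerSeries.coeff_mk, if_neg (lt_irrefl j), sub_zero]
  have hccA : PowerSeries.constantCoeff A = PowerSeries.constantCoeff q := by
    rw [hA, ← PowerSeries.coeff_zero_eq_constantCoeff, PowerSeries.coeff_mk, if_pos hj]
  have hq : q = A + B := by rw [hB]; ring
  rw [hq, add_pow, map_sum]
  have hsub : ({ℓ - 1, ℓ} : Finset ℕ) ⊆ Finset.range (ℓ + 1) := by
    intro k hk
    simp only [Finset.mem_insert, Finset.mem_singleton] at hk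
    rcases hk with rfl | rfl <;> rw [Finset.mem_range] <;> omega
  have hzero : ∀ k ∈ Finset.range (ℓ + 1), k ∉ ({ℓ - 1, ℓ} : Finset ℕ) →
      PowerSeries.coeff j (A ^ k * B ^ (ℓ - k) * (ℓ.choose k : PowerSeries ℝ)) = 0 := by
    intro k hk hknot
    simp only [Finset.mem_insert, Finset.mem_singleton, not_or] at hknot
    rw [Finset.mem_range] at hk
    have h2 : 2 ≤ ℓ - k := by omega
    have hdvd : (PowerSeries.X : PowerSeries ℝ) ^ (j + 1) ∣
        A ^ k * B ^ (ℓ - k) * (ℓ.choose k : PowerSeries ℝ) := by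
      have hd1 : (PowerSeries.X : PowerSeries ℝ) ^ (j + 1) ∣ B ^ (ℓ - k) := by
        rw [hB', mul_pow, ← pow_mul]
        exact Dvd.dvd.mul_right
          (pow_dvd_pow PowerSeries.X (by nlinarith : j + 1 ≤ j * (ℓ - k))) _
      exact Dvd.dvd.mul_right (Dvd.dvd.mul_left hd1 _) _
    exact PowerSeries.X_pow_dvd_iff.mp hdvd j (lt_add_one j)
  rw [← Finset.sum_subset hsub hzero, Finset.sum_pair (by omega : ℓ - 1 ≠ ℓ)]
  have hterm2 : A ^ ℓ * B ^ (ℓ - ℓ) * (ℓ.choose ℓ : PowerSeries ℝ) = A ^ ℓ := by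
    rw [Nat.sub_self, pow_zero, mul_one, Nat.choose_self, Nat.cast_one, mul_one]
  have hterm1 : PowerSeries.coeff j (A ^ (ℓ - 1) * B ^ (ℓ - (ℓ - 1)) * (ℓ.choose (ℓ - 1) : PowerSeries ℝ))
      = (ℓ : ℝ) * (PowerSeries.constantCoeff q) ^ (ℓ - 1) * PowerSeries.coeff j q := by
    have h1 : ℓ - (ℓ - 1) = 1 := by omega
    rw [h1, pow_one]
    rw [show ((ℓ.choose (ℓ - 1) : PowerSeries ℝ)) = PowerSeries.C ((ℓ.choose (ℓ - 1) : ℝ)) from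
      (map_natCast (PowerSeries.C (R := ℝ)) _).symm]
    rw [PowerSeries.coeff_mul_C]
    have h3 : A ^ (ℓ - 1) * B = PowerSeries.X ^ j * (A ^ (ℓ - 1) * B') := by
      rw [hB']; ring
    rw [h3]
    have h4 := PowerSeries.coeff_X_pow_mul (A ^ (ℓ - 1) * B') j 0
    rw [zero_add] at h4
    rw [h4, PowerSeries.coeff_zero_eq_constantCoeff, map_mul, map_pow, hccA,
      ← hcoeffjB, hcoeffjBq, Nat.choose_symm hℓ, Nat.choose_one_right]
    ring
  rw [hterm2, hterm1]
  rw [← hq]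
  ring

theorem ps_coeff_pow_tendsto {x : ℕ → PowerSeries ℝ} {y : PowerSeries ℝ}
    (h : ∀ i : ℕ, Tendsto (fun k => PowerSeries.coeff i (x k)) atTop
      (nhds (PowerSeries.coeff i y))) (t : ℕ) :
    ∀ i : ℕ, Tendsto (fun k => PowerSeries.coeff i ((x k) ^ t)) atTop
      (nhds (PowerSeries.coeff i (y ^ t))) := by
  induction t with
  | zero =>
    intro i
    simp only [pow_zero]
    exact tendsto_const_nhds
  | succ t ih =>
    intro i
    simp only [pow_succ, PowerSeries.coeff_mul]
    apply tendsto_finset_sum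
    intro p _
    exact (ih p.1).mul (h p.2)

end PartC
section PartD

open Filter Topology PowerSeries

theorem ps_root_coeff_tendsto {m ℓ : ℕ} (hm : 0 < m) (hℓ : 0 < ℓ)
    {f : ℕ → PowerSeries ℝ} {g : PowerSeries ℝ} {u : ℕ → PowerSeries ℝ} {v : PowerSeries ℝ}
    (hconv : ∀ i : ℕ, Tendsto (fun k => PowerSeries.coeff i (f k)) atTop
      (nhds (PowerSeries.coeff i g)))
    (hg0 : 0 < PowerSeries.coeff 0 g)
    (hrel : ∀ k, (u k) ^ ℓ = (f k) ^ m) (hvrel : v ^ ℓ = g ^ m)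
    (hu0 : ∀ᶠ k in atTop, PowerSeries.coeff 0 (u k)
      = ((PowerSeries.coeff 0 (f k)) ^ m) ^ ((ℓ : ℝ)⁻¹))
    (hv0 : PowerSeries.coeff 0 v = ((PowerSeries.coeff 0 g) ^ m) ^ ((ℓ : ℝ)⁻¹)) :
    ∀ i : ℕ, Tendsto (fun k => PowerSeries.coeff i (u k)) atTop
      (nhds (PowerSeries.coeff i v)) := by
  have hv0pos : 0 < PowerSeries.coeff 0 v := by
    rw [hv0]
    exact Real.rpow_pos_of_pos (pow_pos hg0 m) _
  have hEu : ∀ᶠ k in atTop, 0 < PowerSeries.coeff 0 (u k) := by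
    have hEf : ∀ᶠ k in atTop, 0 < PowerSeries.coeff 0 (f k) :=
      (hconv 0).eventually (eventually_gt_nhds hg0)
    filter_upwards [hEf, hu0] with k h1 h2
    rw [h2]
    exact Real.rpow_pos_of_pos (pow_pos h1 m) _
  intro i
  induction i using Nat.strong_induction_on with
  | _ i IH =>
    rcases Nat.eq_zero_or_pos i with rfl | hi
    · -- base case
      apply Filter.Tendsto.congr' (hu0.mono fun k hk => hk.symm)
      rw [hv0]
      exact ((hconv 0).pow m).rpow_const (Or.inl (ne_of_gt (pow_pos hg0 m)))
    · -- inductive step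
      set Av : PowerSeries ℝ :=
        PowerSeries.mk fun i' => if i' < i then PowerSeries.coeff i' v else 0 with hAv
      set A : ℕ → PowerSeries ℝ := fun k =>
        PowerSeries.mk fun i' => if i' < i then PowerSeries.coeff i' (u k) else 0 with hA
      have hAconv : ∀ i' : ℕ, Tendsto (fun k => PowerSeries.coeff i' (A k)) atTop
          (nhds (PowerSeries.coeff i' Av)) := by
        intro i'
        simp only [hA, hAv, PowerSeries.coeff_mk]
        by_cases h : i' < i
        · simp only [if_pos h]
          exact IH i' h
        · simp only [if_neg h]
          exact tendsto_const_nhds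
      have hApow := ps_coeff_pow_tendsto hAconv ℓ i
      have hfm := ps_coeff_pow_tendsto hconv m i
      set D : ℝ := (ℓ : ℝ) * (PowerSeries.coeff 0 v) ^ (ℓ - 1) with hD
      have hDne : D ≠ 0 := by
        apply mul_ne_zero (Nat.cast_ne_zero.mpr hℓ.ne')
        exact pow_ne_zero _ hv0pos.ne'
      have hvval : PowerSeries.coeff i v =
          (PowerSeries.coeff i (g ^ m) - PowerSeries.coeff i (Av ^ ℓ)) / D := by
        have hrec := ps_coeff_pow_recursion v hi hℓ
        rw [hvrel] at hrec
        rw [eq_div_iff hDne, hD]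
        rw [← PowerSeries.coeff_zero_eq_constantCoeff] at hrec
        rw [hrec]
        ring
      rw [hvval]
      have hlim : Tendsto (fun k =>
          (PowerSeries.coeff i ((f k) ^ m) - PowerSeries.coeff i ((A k) ^ ℓ)) /
            ((ℓ : ℝ) * (PowerSeries.coeff 0 (u k)) ^ (ℓ - 1))) atTop
          (nhds ((PowerSeries.coeff i (g ^ m) - PowerSeries.coeff i (Av ^ ℓ)) / D)) := by
        apply Filter.Tendsto.div (hfm.sub hApow) _ hDne
        rw [hD]
        exact tendsto_const_nhds.mul ((IH 0 hi).pow (ℓ - 1))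
      apply Filter.Tendsto.congr' _ hlim
      filter_upwards [hEu] with k hk
      have hDkne : (ℓ : ℝ) * (PowerSeries.coeff 0 (u k)) ^ (ℓ - 1) ≠ 0 :=
        mul_ne_zero (Nat.cast_ne_zero.mpr hℓ.ne') (pow_ne_zero _ hk.ne')
      have hrec := ps_coeff_pow_recursion (u k) hi hℓ
      rw [hrel k] at hrec
      rw [← PowerSeries.coeff_zero_eq_constantCoeff] at hrec
      rw [div_eq_iff hDkne, hrec]
      ring

end PartD
section Main

open Filter Topology PowerSeries LeviCivitaField

/-- weak convergence of rational powers `P_k^{m/ℓ} →wk P^{m/ℓ}` for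
positive "polynomials in `d^{1/p}`" of bounded degree. -/
theorem weakTendsto_rpow (p : ℚ) (hp : 0 < p) (n : ℕ) (m ℓ : ℕ) (hm : 0 < m) (hml : m ≤ ℓ)
    (P : ℕ → LeviCivitaField ℝ) (L : LeviCivitaField ℝ)
    (hsuppP : ∀ k, ∀ q ∈ supp (P k), ∃ i : ℕ, i ≤ n ∧ q = (i : ℚ) / p)
    (hsuppL : ∀ q ∈ supp L, ∃ i : ℕ, i ≤ n ∧ q = (i : ℚ) / p)
    (hPpos : ∀ k, Pos (P k)) (hLpos : Pos L) (hL0 : coeff L 0 ≠ 0)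
    (hconv : WeakTendsto P L)
    (Q : ℕ → LeviCivitaField ℝ) (R : LeviCivitaField ℝ)
    (hQnn : ∀ k, Nonneg (Q k)) (hQ : ∀ k, Q k ^ ℓ = P k ^ m)
    (hRnn : Nonneg R) (hR : R ^ ℓ = L ^ m) :
    WeakTendsto Q R := by
  have hℓ : 0 < ℓ := lt_of_lt_of_le hm hml
  set c : ℚ := 1 / (p * ℓ) with hc_def
  have hc : 0 < c := by rw [hc_def]; positivity
  have hlc : (ℓ : ℚ) * c = 1 / p := by
    rw [hc_def]
    field_simp
  -- basic nonvanishing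
  have hPne : ∀ k, ((P k : HahnSeries ℚ ℝ)) ≠ 0 := by
    intro k h
    exact (hPpos k).1 (by exact_mod_cast h)
  have hLne : ((L : HahnSeries ℚ ℝ)) ≠ 0 :=
    HahnSeries.ne_zero_of_coeff_ne_zero hL0
  -- supports on the coarse grid
  have hsupp_grid : ∀ X : LeviCivitaField ℝ,
      (∀ q ∈ supp X, ∃ i : ℕ, i ≤ n ∧ q = (i : ℚ) / p) →
      ∀ q ∈ (X : HahnSeries ℚ ℝ).support, ∃ i : ℕ, q = (i : ℚ) * ((ℓ : ℚ) * c) := by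
    intro X hX q hq
    obtain ⟨i, _, rfl⟩ := hX q hq
    exact ⟨i, by rw [hlc]; ring⟩
  have horder_nonneg : ∀ X : LeviCivitaField ℝ,
      (∀ q ∈ supp X, ∃ i : ℕ, i ≤ n ∧ q = (i : ℚ) / p) →
      (X : HahnSeries ℚ ℝ) ≠ 0 → 0 ≤ (X : HahnSeries ℚ ℝ).order := by
    intro X hX h0
    obtain ⟨i, _, hi⟩ := hX _ ((HahnSeries.coeff_order_eq_zero.not.mpr h0))
    rw [hi]
    positivity
  -- coerced relations
  have hQcoe : ∀ k, ((Q k : HahnSeries ℚ ℝ)) ^ ℓ = ((P k : HahnSeries ℚ ℝ)) ^ m := by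
    intro k
    have := congrArg ((LeviCivitaField ℝ).subtype) (hQ k)
    simpa [map_pow] using this
  have hRcoe : ((R : HahnSeries ℚ ℝ)) ^ ℓ = ((L : HahnSeries ℚ ℝ)) ^ m := by
    have := congrArg ((LeviCivitaField ℝ).subtype) hR
    simpa [map_pow] using this
  have hQne : ∀ k, ((Q k : HahnSeries ℚ ℝ)) ≠ 0 := by
    intro k h0
    have h1 : ((P k : HahnSeries ℚ ℝ)) ^ m = 0 := by
      rw [← hQcoe k, h0, zero_pow hℓ.ne']
    exact hPne k (pow_eq_zero_iff hm.ne' |>.mp h1)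
  have hRne : ((R : HahnSeries ℚ ℝ)) ≠ 0 := by
    intro h0
    have h1 : ((L : HahnSeries ℚ ℝ)) ^ m = 0 := by
      rw [← hRcoe, h0, zero_pow hℓ.ne']
    exact hLne (pow_eq_zero_iff hm.ne' |>.mp h1)
  -- fine grid support of the roots
  have hQgridZ : ∀ k, ∀ q ∈ ((Q k : HahnSeries ℚ ℝ)).support, ∃ z : ℤ, q = (z : ℚ) * c := by
    intro k
    apply hahn_root_support hc hℓ (hQne k)
    rw [hQcoe k]
    intro q hq
    obtain ⟨i, hi⟩ := hahn_support_pow_grid (hsupp_grid (P k) (hsuppP k)) m q hq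
    exact ⟨i, by exact_mod_cast hi⟩
  have hRgridZ : ∀ q ∈ ((R : HahnSeries ℚ ℝ)).support, ∃ z : ℤ, q = (z : ℚ) * c := by
    apply hahn_root_support hc hℓ hRne
    rw [hRcoe]
    intro q hq
    obtain ⟨i, hi⟩ := hahn_support_pow_grid (hsupp_grid L hsuppL) m q hq
    exact ⟨i, by exact_mod_cast hi⟩
  -- orders of the roots are nonnegative
  have horder_root : ∀ (X W : LeviCivitaField ℝ),
      (X : HahnSeries ℚ ℝ) ^ ℓ = (W : HahnSeries ℚ ℝ) ^ m →
      0 ≤ (W : HahnSeries ℚ ℝ).order → 0 ≤ (X : HahnSeries ℚ ℝ).order := by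
    intro X W hrel hW
    have h1 : (ℓ : ℚ) * (X : HahnSeries ℚ ℝ).order = (m : ℚ) * (W : HahnSeries ℚ ℝ).order := by
      have h2 := congrArg HahnSeries.order hrel
      rwa [HahnSeries.order_pow, HahnSeries.order_pow, nsmul_eq_mul, nsmul_eq_mul] at h2
    have hℓq : (0 : ℚ) < (ℓ : ℚ) := by exact_mod_cast hℓ
    have hmq : (0 : ℚ) ≤ (m : ℚ) := by positivity
    nlinarith
  have hQorder : ∀ k, 0 ≤ ((Q k : HahnSeries ℚ ℝ)).order :=
    fun k => horder_root (Q k) (P k) (hQcoe k) (horder_nonneg (P k) (hsuppP k) (hPne k))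
  have hRorder : 0 ≤ ((R : HahnSeries ℚ ℝ)).order :=
    horder_root R L hRcoe (horder_nonneg L hsuppL hLne)
  have gridZ_to_grid : ∀ (X : LeviCivitaField ℝ),
      (∀ q ∈ (X : HahnSeries ℚ ℝ).support, ∃ z : ℤ, q = (z : ℚ) * c) →
      0 ≤ (X : HahnSeries ℚ ℝ).order →
      ∀ q ∈ (X : HahnSeries ℚ ℝ).support, ∃ j : ℕ, q = (j : ℚ) * c := by
    intro X hX hord q hq
    obtain ⟨z, hz⟩ := hX q hq
    have hq0 : 0 ≤ q := le_trans hord (HahnSeries.order_le_of_coeff_ne_zero hq)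
    have hz0 : 0 ≤ z := by
      by_contra h
      push_neg at h
      have hneg : (z : ℚ) * c < 0 := mul_neg_of_neg_of_pos (by exact_mod_cast h) hc
      rw [← hz] at hneg
      linarith
    refine ⟨z.toNat, by rw [hz]; congr 1; exact_mod_cast (Int.toNat_of_nonneg hz0).symm⟩
  have hQgrid : ∀ k, ∀ q ∈ ((Q k : HahnSeries ℚ ℝ)).support, ∃ j : ℕ, q = (j : ℚ) * c :=
    fun k => gridZ_to_grid (Q k) (hQgridZ k) (hQorder k)
  have hRgrid : ∀ q ∈ ((R : HahnSeries ℚ ℝ)).support, ∃ j : ℕ, q = (j : ℚ) * c :=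
    gridZ_to_grid R hRgridZ hRorder
  have hPgrid : ∀ k, ∀ q ∈ ((P k : HahnSeries ℚ ℝ)).support, ∃ j : ℕ, q = (j : ℚ) * c := by
    intro k q hq
    obtain ⟨i, hi⟩ := hsupp_grid (P k) (hsuppP k) q hq
    exact ⟨i * ℓ, by rw [hi]; push_cast; ring⟩
  have hLgrid : ∀ q ∈ ((L : HahnSeries ℚ ℝ)).support, ∃ j : ℕ, q = (j : ℚ) * c := by
    intro q hq
    obtain ⟨i, hi⟩ := hsupp_grid L hsuppL q hq
    exact ⟨i * ℓ, by rw [hi]; push_cast; ring⟩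
  -- leading (constant) coefficients
  have hL0ord : ((L : HahnSeries ℚ ℝ)).order = 0 :=
    le_antisymm (HahnSeries.order_le_of_coeff_ne_zero hL0) (horder_nonneg L hsuppL hLne)
  have hL0pos : 0 < coeff L 0 := by
    have h1 := hLpos.2
    have h2 : lam L = 0 := hL0ord
    rwa [h2] at h1
  -- value of constant coefficient of a nonnegative root
  have hval : ∀ (X W : LeviCivitaField ℝ),
      (X : HahnSeries ℚ ℝ) ^ ℓ = (W : HahnSeries ℚ ℝ) ^ m →
      Nonneg X → 0 < coeff W 0 → 0 ≤ (W : HahnSeries ℚ ℝ).order →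
      coeff X 0 = ((coeff W 0) ^ m) ^ ((ℓ : ℝ)⁻¹) := by
    intro X W hrel hXnn hW0 hWord
    have hWne : (W : HahnSeries ℚ ℝ) ≠ 0 := HahnSeries.ne_zero_of_coeff_ne_zero hW0.ne'
    have hWordeq : ((W : HahnSeries ℚ ℝ)).order = 0 :=
      le_antisymm (HahnSeries.order_le_of_coeff_ne_zero hW0.ne') hWord
    have hXne : (X : HahnSeries ℚ ℝ) ≠ 0 := by
      intro h0
      have h1 : ((W : HahnSeries ℚ ℝ)) ^ m = 0 := by
        rw [← hrel, h0, zero_pow hℓ.ne']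
      exact hWne (pow_eq_zero_iff hm.ne' |>.mp h1)
    have hXord : ((X : HahnSeries ℚ ℝ)).order = 0 := by
      have h1 : (ℓ : ℚ) * (X : HahnSeries ℚ ℝ).order = (m : ℚ) * (W : HahnSeries ℚ ℝ).order := by
        have h2 := congrArg HahnSeries.order hrel
        rwa [HahnSeries.order_pow, HahnSeries.order_pow, nsmul_eq_mul, nsmul_eq_mul] at h2
      rw [hWordeq, mul_zero] at h1
      have hℓq : ((ℓ : ℚ)) ≠ 0 := by exact_mod_cast hℓ.ne'
      exact (mul_eq_zero.mp h1).resolve_left hℓq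
    have hX0pos : 0 < coeff X 0 := by
      rcases hXnn with h | h
      · exact absurd (by rw [h]; simp) hXne
      · have h1 := h.2
        have h2 : lam X = 0 := hXord
        rwa [h2] at h1
    -- (coeff X 0) ^ ℓ = (coeff W 0) ^ m
    have hpow : (coeff X 0) ^ ℓ = (coeff W 0) ^ m := by
      have h1 : ((X : HahnSeries ℚ ℝ) ^ ℓ).coeff 0 = (coeff X 0) ^ ℓ := by
        have := hahn_leadingCoeff_pow (X : HahnSeries ℚ ℝ) ℓ
        rw [HahnSeries.leadingCoeff_eq, HahnSeries.leadingCoeff_eq, HahnSeries.order_pow,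
          hXord] at this
        simpa [LeviCivitaField.coeff] using this
      have h2 : ((W : HahnSeries ℚ ℝ) ^ m).coeff 0 = (coeff W 0) ^ m := by
        have := hahn_leadingCoeff_pow (W : HahnSeries ℚ ℝ) m
        rw [HahnSeries.leadingCoeff_eq, HahnSeries.leadingCoeff_eq, HahnSeries.order_pow,
          hWordeq] at this
        simpa [LeviCivitaField.coeff] using this
      rw [← h1, ← h2, hrel]
    rw [← hpow, Real.pow_rpow_inv_natCast hX0pos.le hℓ.ne']
  -- eventual positivity
  have hEP : ∀ᶠ k in atTop, 0 < coeff (P k) 0 :=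
    (lcf_coeff_tendsto hconv 0).eventually (eventually_gt_nhds hL0pos)
  -- power series
  have hrelps : ∀ k, (toPS c (Q k : HahnSeries ℚ ℝ)) ^ ℓ = (toPS c (P k : HahnSeries ℚ ℝ)) ^ m := by
    intro k
    rw [← toPS_pow hc (hQgrid k) ℓ, ← toPS_pow hc (hPgrid k) m, hQcoe k]
  have hvrelps : (toPS c (R : HahnSeries ℚ ℝ)) ^ ℓ = (toPS c (L : HahnSeries ℚ ℝ)) ^ m := by
    rw [← toPS_pow hc hRgrid ℓ, ← toPS_pow hc hLgrid m, hRcoe]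
  have hcoeff_toPS : ∀ (X : LeviCivitaField ℝ) (j : ℕ),
      PowerSeries.coeff j (toPS c (X : HahnSeries ℚ ℝ)) = coeff X ((j : ℚ) * c) := by
    intro X j
    rw [toPS, PowerSeries.coeff_mk]
    rfl
  have hzero_c : ((0 : ℕ) : ℚ) * c = 0 := by norm_num
  have hconvps : ∀ i : ℕ, Tendsto (fun k => PowerSeries.coeff i (toPS c (P k : HahnSeries ℚ ℝ)))
      atTop (nhds (PowerSeries.coeff i (toPS c (L : HahnSeries ℚ ℝ)))) := by
    intro i
    simp only [hcoeff_toPS]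
    exact lcf_coeff_tendsto hconv _
  have hg0ps : 0 < PowerSeries.coeff 0 (toPS c (L : HahnSeries ℚ ℝ)) := by
    rw [hcoeff_toPS, hzero_c]
    exact hL0pos
  have hu0ps : ∀ᶠ k in atTop, PowerSeries.coeff 0 (toPS c (Q k : HahnSeries ℚ ℝ))
      = ((PowerSeries.coeff 0 (toPS c (P k : HahnSeries ℚ ℝ))) ^ m) ^ ((ℓ : ℝ)⁻¹) := by
    filter_upwards [hEP] with k hk
    rw [hcoeff_toPS, hcoeff_toPS, hzero_c]
    exact hval (Q k) (P k) (hQcoe k) (hQnn k) hk (horder_nonneg (P k) (hsuppP k) (hPne k))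
  have hv0ps : PowerSeries.coeff 0 (toPS c (R : HahnSeries ℚ ℝ))
      = ((PowerSeries.coeff 0 (toPS c (L : HahnSeries ℚ ℝ))) ^ m) ^ ((ℓ : ℝ)⁻¹) := by
    rw [hcoeff_toPS, hcoeff_toPS, hzero_c]
    exact hval R L hRcoe hRnn hL0pos (horder_nonneg L hsuppL hLne)
  have hups := ps_root_coeff_tendsto hm hℓ hconvps hg0ps hrelps hvrelps hu0ps hv0ps
  -- final assembly
  apply lcf_weakTendsto_of_coeff_tendsto (S := {q : ℚ | ∃ j : ℕ, q = (j : ℚ) * c})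
  · -- left-finiteness of the grid
    intro r
    obtain ⟨N, hN⟩ := exists_nat_gt (r / c)
    apply Set.Finite.subset ((Set.finite_Iio N).image (fun j : ℕ => (j : ℚ) * c))
    rintro q ⟨⟨j, rfl⟩, hq⟩
    refine ⟨j, ?_, rfl⟩
    rw [Set.mem_Iio]
    have h1 : (j : ℚ) < r / c := by
      rw [lt_div_iff₀ hc]
      exact hq
    exact_mod_cast h1.trans hN
  · -- supports
    intro k q hq
    have h1 : coeff (Q k - R) q ≠ 0 := hq
    rw [lcf_coeff_sub] at h1
    by_cases h2 : coeff (Q k) q = 0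
    · have h3 : coeff R q ≠ 0 := by
        intro h
        rw [h2, h, sub_zero] at h1
        exact h1 rfl
      exact hRgrid q h3
    · exact hQgrid k q h2
  · -- coefficientwise convergence
    intro q
    by_cases hq : ∃ j : ℕ, q = (j : ℚ) * c
    · obtain ⟨j, rfl⟩ := hq
      have h4 := hups j
      simp only [hcoeff_toPS] at h4
      exact h4
    · push_neg at hq
      have h1 : ∀ k, coeff (Q k) q = 0 := by
        intro k
        by_contra h
        obtain ⟨j, hj⟩ := hQgrid k q h
        exact hq j hj
      have h2 : coeff R q = 0 := by
        by_contra h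
        obtain ⟨j, hj⟩ := hRgrid q h
        exact hq j hj
      rw [h2]
      exact Tendsto.congr (fun k => (h1 k).symm) tendsto_const_nhds

end Main
end
end

section
/- Let n ≥ 2. Let ν₁, …, ν_n ∈ 𝒞 be at most finite with ν₁[0] = 1 and complex modulus |ν_j[0]| < 1 for j = 2, …, n. For j = 2, …, n let r_j ∈ 𝒞 satisfy r_j·ν₁ = ν_j (i.e. r_j = ν_j/ν₁), and let w₂, …, w_n ∈ 𝒞ⁿ be vectors with at most finite entries. Then for each coordinate i ∈ {1, …, n}, the sequence ξ_k^i := Σ_{j=2}^{n} r_j^k · w_j^i (k ≥ 1) is regular and converges weakly to 0. -/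
open Pointwise

noncomputable section

open LeviCivitaField

namespace LCAux
open Filter LeviCivitaField

theorem lf_isPWO {U : Set ℚ} (h : LeftFinite U) : U.IsPWO := by
  rw [Set.isPWO_iff_isWF, Set.isWF_iff_no_descending_seq]
  intro f hf hmem
  exact (h (f 0 + 1)).not_infinite (Set.infinite_of_injective_forall_mem hf.injective
    (fun n => ⟨hmem n, lt_of_le_of_lt (hf.antitone (Nat.zero_le n)) (by linarith)⟩))

theorem lf_biUnion {ι : Type*} (s : Finset ι) (A : ι → Set ℚ)
    (h : ∀ j ∈ s, LeftFinite (A j)) : LeftFinite (⋃ j ∈ s, A j) := by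
  intro r
  have : {q ∈ ⋃ j ∈ s, A j | q < r} ⊆ ⋃ j ∈ s, {q ∈ A j | q < r} := by
    rintro q ⟨hq, hr⟩
    rw [Set.mem_iUnion₂] at hq ⊢
    obtain ⟨j, hj, hqj⟩ := hq
    exact ⟨j, hj, hqj, hr⟩
  exact (Set.Finite.biUnion s.finite_toSet (fun j hj => h j hj r)).subset this

local notation "L" => LeviCivitaField ℂ

theorem coeff_def (x : L) (q : ℚ) : coeff x q = (x : HahnSeries ℚ ℂ).coeff q := rfl
theorem supp_def (x : L) : supp x = (x : HahnSeries ℚ ℂ).support := rfl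

theorem coe_mul (x y : L) : ((x * y : L) : HahnSeries ℚ ℂ) = (x : HahnSeries ℚ ℂ) * y := by
  push_cast; ring

theorem coe_pow (x : L) (k : ℕ) : ((x ^ k : L) : HahnSeries ℚ ℂ) = (x : HahnSeries ℚ ℂ) ^ k := by
  push_cast; ring

theorem coeff_sub (x y : L) (q : ℚ) : coeff (x - y) q = coeff x q - coeff y q := by
  have h : ((x - y : L) : HahnSeries ℚ ℂ) = (x : HahnSeries ℚ ℂ) - y := by push_cast; ring
  rw [coeff_def, h, HahnSeries.coeff_sub]; rfl

theorem coeff_sum {ι : Type*} (s : Finset ι) (f : ι → L) (q : ℚ) :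
    coeff (∑ j ∈ s, f j) q = ∑ j ∈ s, coeff (f j) q := by
  classical
  induction s using Finset.induction_on with
  | empty => simp [coeff_def]
  | insert a s hx ih =>
    rw [Finset.sum_insert hx, Finset.sum_insert hx, ← ih]
    have h : ((f a + ∑ j ∈ s, f j : L) : HahnSeries ℚ ℂ)
        = (f a : HahnSeries ℚ ℂ) + ((∑ j ∈ s, f j : L) : HahnSeries ℚ ℂ) := by push_cast; ring
    rw [coeff_def, h, HahnSeries.coeff_add]; rfl

theorem mem_supp {x : L} {q : ℚ} : q ∈ supp x ↔ coeff x q ≠ 0 := Iff.rfl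

theorem supp_sum_subset {ι : Type*} (s : Finset ι) (f : ι → L) :
    supp (∑ j ∈ s, f j) ⊆ ⋃ j ∈ s, supp (f j) := by
  intro q hq
  rw [mem_supp, coeff_sum] at hq
  obtain ⟨j, hj, hne⟩ := Finset.exists_ne_zero_of_sum_ne_zero hq
  exact Set.mem_biUnion hj hne

/-- support bounded below by `δ` -/
def SGE (x : L) (δ : ℚ) : Prop := ∀ q : ℚ, q < δ → coeff x q = 0

theorem SGE.mono {x : L} {a b : ℚ} (h : SGE x a) (hba : b ≤ a) : SGE x b :=
  fun q hq => h q (lt_of_lt_of_le hq hba)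

theorem SGE.mul {x y : L} {a b : ℚ} (hx : SGE x a) (hy : SGE y b) : SGE (x * y) (a + b) := by
  intro q hq
  rw [coeff_def, coe_mul, HahnSeries.coeff_mul]
  refine Finset.sum_eq_zero ?_
  rintro ⟨s, t⟩ hst
  rw [Finset.mem_addAntidiagonal] at hst
  obtain ⟨hs, ht, hsum⟩ := hst
  exfalso
  have h1 : a ≤ s := by
    by_contra hlt; exact hs (hx s (not_le.mp hlt))
  have h2 : b ≤ t := by
    by_contra hlt; exact ht (hy t (not_le.mp hlt))
  simp only at hsum; linarith

theorem SGE.one : SGE (1 : L) 0 := by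
  intro q hq
  rw [coeff_def]
  have h : ((1 : L) : HahnSeries ℚ ℂ) = 1 := rfl
  rw [h, HahnSeries.coeff_one, if_neg (ne_of_lt hq)]

theorem SGE.pow {x : L} {a : ℚ} (ha : 0 ≤ a) (hx : SGE x a) (m : ℕ) : SGE (x ^ m) (m * a) := by
  induction m with
  | zero => simpa using SGE.one
  | succ m ih =>
    have := ih.mul hx
    rw [pow_succ]
    refine this.mono ?_
    push_cast; ring_nf; linarith [le_refl ((m : ℚ) * a)]

/-- embedding of constants -/
def Cc (c : ℂ) : L :=
  ⟨HahnSeries.single 0 c,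
    Set.Finite.leftFinite ((Set.finite_singleton 0).subset HahnSeries.support_single_subset)⟩

theorem coeff_Cc (c : ℂ) (q : ℚ) : coeff (Cc c) q = if q = 0 then c else 0 := by
  rw [coeff_def]
  show (HahnSeries.single 0 c).coeff q = _
  by_cases h : q = 0
  · subst h; rw [if_pos rfl, HahnSeries.coeff_single_same]
  · rw [if_neg h, HahnSeries.coeff_single_of_ne h]

theorem coeff_Cc_mul (c : ℂ) (z : L) (q : ℚ) : coeff (Cc c * z) q = c * coeff z q := by
  rw [coeff_def, coe_mul]
  exact HahnSeries.coeff_single_zero_mul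

theorem Cc_mul_Cc (c d : ℂ) : Cc c * Cc d = Cc (c * d) := by
  apply Subtype.ext
  rw [coe_mul]
  show HahnSeries.single 0 c * HahnSeries.single 0 d = HahnSeries.single 0 (c * d)
  rw [HahnSeries.single_mul_single, zero_add]

theorem Cc_one : Cc 1 = (1 : L) := by
  apply Subtype.ext
  show HahnSeries.single (0 : ℚ) (1 : ℂ) = 1
  rfl

theorem Cc_pow (c : ℂ) (m : ℕ) : (Cc c) ^ m = Cc (c ^ m) := by
  induction m with
  | zero => simpa using Cc_one.symm
  | succ m ih => rw [pow_succ, ih, Cc_mul_Cc, pow_succ]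

theorem natCast_eq_Cc (n : ℕ) : (n : L) = Cc (n : ℂ) := by
  apply Subtype.ext
  have h1 : ((n : L) : HahnSeries ℚ ℂ) = (n : HahnSeries ℚ ℂ) := by push_cast; ring
  rw [h1]
  show (n : HahnSeries ℚ ℂ) = HahnSeries.single 0 (n : ℂ)
  rw [← HahnSeries.C_apply, map_natCast]




theorem pow_coeff_eq (x : L) (k : ℕ) (q : ℚ) :
    coeff (x ^ k) q = ∑ m ∈ Finset.range (k + 1),
      (k.choose m : ℂ) * (coeff x 0) ^ (k - m) * coeff ((x - Cc (coeff x 0)) ^ m) q := by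
  set c := coeff x 0 with hc
  set y := x - Cc c with hy
  have hxe : x = y + Cc c := by rw [hy]; ring
  calc coeff (x ^ k) q = coeff ((y + Cc c) ^ k) q := by rw [← hxe]
    _ = coeff (∑ m ∈ Finset.range (k + 1), y ^ m * (Cc c) ^ (k - m) * (k.choose m : L)) q := by
        rw [add_pow]
    _ = ∑ m ∈ Finset.range (k + 1), coeff (y ^ m * (Cc c) ^ (k - m) * (k.choose m : L)) q := by
        rw [coeff_sum]
    _ = _ := by
        refine Finset.sum_congr rfl fun m _ => ?_
        rw [Cc_pow, natCast_eq_Cc, mul_assoc, Cc_mul_Cc, mul_comm (y ^ m), coeff_Cc_mul]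
        ring

theorem exists_eps (y : L) (hy : ∀ q : ℚ, q ≤ 0 → coeff y q = 0) :
    ∃ ε : ℚ, 0 < ε ∧ ∀ m : ℕ, ∀ q : ℚ, q < (m : ℚ) * ε → coeff (y ^ m) q = 0 := by
  by_cases h0 : y = 0
  · refine ⟨1, one_pos, fun m q hq => ?_⟩
    rcases Nat.eq_zero_or_pos m with rfl | hm
    · simp only [Nat.cast_zero, zero_mul] at hq
      exact SGE.one q hq
    · rw [h0, zero_pow hm.ne']
      simp [coeff_def]
  · have h0' : (y : HahnSeries ℚ ℂ) ≠ 0 := fun h => h0 (Subtype.ext h)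
    set ε := (y : HahnSeries ℚ ℂ).order with hε
    have hmem : coeff y ε ≠ 0 := fun h => h0' (HahnSeries.coeff_order_eq_zero.mp h)
    have hpos : 0 < ε := by
      by_contra hle
      exact hmem (hy ε (not_lt.mp hle))
    have hsge : SGE y ε := fun q hq => HahnSeries.coeff_eq_zero_of_lt_order hq
    exact ⟨ε, hpos, fun m q hq => (hsge.pow hpos.le m) q hq⟩

theorem key (x : L) (hx : LeviCivitaField.AtMostFinite x)
    (hcabs : ‖coeff x 0‖ < 1) :
    ∃ U : Set ℚ, U.IsPWO ∧ LeftFinite U ∧ (∀ k : ℕ, supp (x ^ k) ⊆ U) ∧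
      (∀ q : ℚ, Filter.Tendsto (fun k => coeff (x ^ k) q) Filter.atTop (nhds 0)) := by
  classical
  set c := coeff x 0 with hc
  set y := x - Cc c with hy
  have hy0 : ∀ q : ℚ, q ≤ 0 → coeff y q = 0 := by
    intro q hq
    rw [hy, coeff_sub, coeff_Cc]
    rcases lt_or_eq_of_le hq with hlt | heq
    · rw [hx q hlt, if_neg (ne_of_lt hlt)]; ring
    · subst heq; rw [if_pos rfl]; ring
  obtain ⟨ε, hεpos, hεzero⟩ := exists_eps y hy0
  set U : Set ℚ := ⋃ m : ℕ, supp (y ^ m) with hU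
  have hUlf : LeftFinite U := by
    intro Q
    obtain ⟨M, hM⟩ := exists_nat_gt (Q / ε)
    have hQM : Q < (M : ℚ) * ε := by
      rw [div_lt_iff₀ hεpos] at hM; linarith
    have hsub : {q ∈ U | q < Q} ⊆ ⋃ m ∈ Finset.range M, {q ∈ supp (y ^ m) | q < Q} := by
      rintro q ⟨hqU, hqQ⟩
      rw [hU, Set.mem_iUnion] at hqU
      obtain ⟨m, hm⟩ := hqU
      have hge : (m : ℚ) * ε ≤ q := by
        by_contra hlt
        exact hm (hεzero m q (not_le.mp hlt))
      have hmM : m < M := by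
        have : (m : ℚ) * ε < (M : ℚ) * ε := by linarith
        exact_mod_cast lt_of_mul_lt_mul_right this hεpos.le
      exact Set.mem_biUnion (Finset.mem_range.mpr hmM) ⟨hm, hqQ⟩
    exact (Set.Finite.biUnion (Finset.range M).finite_toSet
      (fun m _ => (y ^ m).2 Q)).subset hsub
  have hUsupp : ∀ k : ℕ, supp (x ^ k) ⊆ U := by
    intro k q hq
    rw [mem_supp, pow_coeff_eq] at hq
    obtain ⟨m, _, hne⟩ := Finset.exists_ne_zero_of_sum_ne_zero hq
    have : coeff (y ^ m) q ≠ 0 := fun h => hne (by rw [← hy, ← hc] at *; rw [h]; ring)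
    exact Set.mem_iUnion.mpr ⟨m, this⟩
  refine ⟨U, lf_isPWO hUlf, hUlf, hUsupp, ?_⟩
  intro q
  obtain ⟨M, hM⟩ := exists_nat_gt (q / ε)
  have hqM : q < (M : ℚ) * ε := by rw [div_lt_iff₀ hεpos] at hM; linarith
  have hgm : ∀ m : ℕ, M ≤ m → coeff (y ^ m) q = 0 := by
    intro m hm
    refine hεzero m q (lt_of_lt_of_le hqM ?_)
    have : (M : ℚ) ≤ m := by exact_mod_cast hm
    nlinarith
  have heq : ∀ k : ℕ, M ≤ k → coeff (x ^ k) q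
      = ∑ m ∈ Finset.range M, (k.choose m : ℂ) * c ^ (k - m) * coeff (y ^ m) q := by
    intro k hk
    rw [pow_coeff_eq, ← hc, ← hy]
    refine (Finset.sum_subset (Finset.range_subset_range.mpr (by omega)) ?_).symm
    intro m _ hm
    rw [hgm m (not_lt.mp (fun h => hm (Finset.mem_range.mpr h)))]
    ring
  have hterm : ∀ m : ℕ, Filter.Tendsto (fun k : ℕ => (k.choose m : ℂ) * c ^ (k - m))
      Filter.atTop (nhds 0) := by
    intro m
    by_cases hc0 : c = 0
    · refine Filter.Tendsto.congr' ?_ tendsto_const_nhds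
      filter_upwards [Filter.eventually_ge_atTop (m + 1)] with k hk
      rw [hc0, zero_pow (by omega : k - m ≠ 0), mul_zero]
    · set b := ‖c‖ with hb
      have hb0 : 0 < b := norm_pos_iff.mpr hc0
      have hb1 : b < 1 := hcabs
      have hbound : Filter.Tendsto (fun k : ℕ => (1 / b ^ m) * ((k : ℝ) ^ m * b ^ k))
          Filter.atTop (nhds 0) := by
        have h := tendsto_pow_const_mul_const_pow_of_abs_lt_one m
          (by rwa [abs_of_nonneg hb0.le] : |b| < 1)
        simpa using h.const_mul (1 / b ^ m)
      refine squeeze_zero_norm' ?_ hbound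
      filter_upwards [Filter.eventually_ge_atTop m] with k hk
      have h1 : ‖(k.choose m : ℂ) * c ^ (k - m)‖ = (k.choose m : ℝ) * b ^ (k - m) := by
        rw [norm_mul, norm_pow, Complex.norm_natCast]
      rw [h1, pow_sub₀ b hb0.ne' hk]
      have h2 : (k.choose m : ℝ) ≤ (k : ℝ) ^ m := by
        calc (k.choose m : ℝ) ≤ (k : ℝ) ^ m / (m.factorial : ℝ) := Nat.choose_le_pow_div m k
          _ ≤ (k : ℝ) ^ m := by
              apply div_le_self (by positivity)
              exact_mod_cast Nat.one_le_iff_ne_zero.mpr m.factorial_pos.ne'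
      calc (k.choose m : ℝ) * (b ^ k / b ^ m) ≤ (k : ℝ) ^ m * (b ^ k / b ^ m) :=
            mul_le_mul_of_nonneg_right h2 (by positivity)
        _ = (1 / b ^ m) * ((k : ℝ) ^ m * b ^ k) := by ring
  have hsum : Filter.Tendsto (fun k : ℕ => ∑ m ∈ Finset.range M,
      (k.choose m : ℂ) * c ^ (k - m) * coeff (y ^ m) q) Filter.atTop (nhds 0) := by
    have h := tendsto_finset_sum (Finset.range M)
      (fun m _ => (hterm m).mul_const (coeff (y ^ m) q))
    simpa using h
  refine Filter.Tendsto.congr' ?_ hsum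
  filter_upwards [Filter.eventually_ge_atTop M] with k hk
  exact (heq k hk).symm



theorem key2 (x w : L) (hx : LeviCivitaField.AtMostFinite x)
    (hcabs : ‖coeff x 0‖ < 1) (hw : LeviCivitaField.AtMostFinite w) :
    ∃ V : Set ℚ, LeftFinite V ∧ (∀ k : ℕ, supp (x ^ (k + 1) * w) ⊆ V) ∧
      (∀ q : ℚ, Filter.Tendsto (fun k => coeff (x ^ (k + 1) * w) q) Filter.atTop (nhds 0)) := by
  obtain ⟨U, hUpwo, hUlf, hUsupp, hUtend⟩ := key x hx hcabs
  refine ⟨U + supp w, hUlf.addSet w.2, ?_, ?_⟩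
  · intro k q hq
    rw [supp_def, coe_mul] at hq
    have h := HahnSeries.support_mul_subset hq
    obtain ⟨s, hs, t, ht, rfl⟩ := Set.mem_add.mp h
    exact Set.mem_add.mpr ⟨s, hUsupp (k + 1) hs, t, ht, rfl⟩
  · intro q
    have hcoeff : ∀ k : ℕ, coeff (x ^ (k + 1) * w) q =
        ∑ ij ∈ Finset.addAntidiagonal hUpwo (w : HahnSeries ℚ ℂ).isPWO_support q,
          coeff (x ^ (k + 1)) ij.1 * coeff w ij.2 := by
      intro k
      rw [coeff_def, coe_mul]
      exact HahnSeries.coeff_mul_left' hUpwo (hUsupp (k + 1))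
    refine Filter.Tendsto.congr (fun k => (hcoeff k).symm) ?_
    have h := tendsto_finset_sum
      (Finset.addAntidiagonal hUpwo (w : HahnSeries ℚ ℂ).isPWO_support q)
      (fun ij _ => Filter.Tendsto.mul_const (coeff w ij.2)
        ((hUtend ij.1).comp (tendsto_add_atTop_nat 1)))
    simpa [Function.comp] using h

theorem amf_step1 (x v : L) (hv : LeviCivitaField.AtMostFinite v) (hv0 : coeff v 0 = 1)
    (hxv : LeviCivitaField.AtMostFinite (x * v)) : LeviCivitaField.AtMostFinite x := by
  classical
  by_contra hnot
  rw [LeviCivitaField.AtMostFinite] at hnot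
  push_neg at hnot
  obtain ⟨q1, hq1, hq1ne⟩ := hnot
  set S := {q ∈ (x : HahnSeries ℚ ℂ).support | q < 0} with hS
  have hSfin : S.Finite := x.2 0
  have hq1S : q1 ∈ S := ⟨hq1ne, hq1⟩
  have hFne : hSfin.toFinset.Nonempty := ⟨q1, hSfin.mem_toFinset.mpr hq1S⟩
  set q0 := hSfin.toFinset.min' hFne with hq0
  have hq0S : q0 ∈ S := hSfin.mem_toFinset.mp (hSfin.toFinset.min'_mem hFne)
  have hq0min : ∀ s ∈ S, q0 ≤ s := fun s hs =>
    hSfin.toFinset.min'_le s (hSfin.mem_toFinset.mpr hs)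
  have h0supp : (0 : ℚ) ∈ (v : HahnSeries ℚ ℂ).support := by
    rw [HahnSeries.mem_support]
    show coeff v 0 ≠ 0
    rw [hv0]; exact one_ne_zero
  have hcalc : coeff (x * v) q0 = coeff x q0 := by
    rw [coeff_def, coe_mul, HahnSeries.coeff_mul]
    rw [Finset.sum_eq_single_of_mem ((q0 : ℚ), (0 : ℚ))
      (Finset.mem_addAntidiagonal.mpr ⟨hq0S.1, h0supp, add_zero q0⟩) ?_]
    · show (x : HahnSeries ℚ ℂ).coeff q0 * (v : HahnSeries ℚ ℂ).coeff 0 = _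
      have : (v : HahnSeries ℚ ℂ).coeff 0 = 1 := hv0
      rw [this, mul_one]; rfl
    · rintro ⟨s, t⟩ hst hne
      rw [Finset.mem_addAntidiagonal] at hst
      obtain ⟨hs, ht, hsum⟩ := hst
      exfalso
      apply hne
      simp only at hsum
      have ht0 : 0 ≤ t := by
        by_contra h
        exact ht (hv t (not_le.mp h))
      have hs0 : s < 0 := by
        have := hq0S.2; linarith
      have hle : q0 ≤ s := hq0min s ⟨hs, hs0⟩
      have hseq : s = q0 := le_antisymm (by linarith) hle
      have hteq : t = 0 := by linarith
      rw [hseq, hteq]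
  have h1 := hxv q0 hq0S.2
  rw [hcalc] at h1
  exact hq0S.1 h1

theorem amf_step2 (x v : L) (hx : LeviCivitaField.AtMostFinite x)
    (hv : LeviCivitaField.AtMostFinite v) (hv0 : coeff v 0 = 1) :
    coeff (x * v) 0 = coeff x 0 := by
  classical
  have h0supp : (0 : ℚ) ∈ (v : HahnSeries ℚ ℂ).support := by
    rw [HahnSeries.mem_support]
    show coeff v 0 ≠ 0
    rw [hv0]; exact one_ne_zero
  rw [coeff_def, coe_mul, HahnSeries.coeff_mul]
  rw [Finset.sum_eq_single ((0 : ℚ), (0 : ℚ))]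
  · show (x : HahnSeries ℚ ℂ).coeff 0 * (v : HahnSeries ℚ ℂ).coeff 0 = _
    have : (v : HahnSeries ℚ ℂ).coeff 0 = 1 := hv0
    rw [this, mul_one]; rfl
  · rintro ⟨s, t⟩ hst hne
    rw [Finset.mem_addAntidiagonal] at hst
    obtain ⟨hs, ht, hsum⟩ := hst
    exfalso
    apply hne
    simp only at hsum
    have hs0 : 0 ≤ s := by
      by_contra h
      exact hs (hx s (not_le.mp h))
    have ht0 : 0 ≤ t := by
      by_contra h
      exact ht (hv t (not_le.mp h))
    have hseq : s = 0 := by linarith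
    have hteq : t = 0 := by linarith
    rw [hseq, hteq]
  · intro hnotmem
    by_cases h : (x : HahnSeries ℚ ℂ).coeff 0 = 0
    · rw [h, zero_mul]
    · exfalso
      exact hnotmem (Finset.mem_addAntidiagonal.mpr ⟨h, h0supp, add_zero 0⟩)

end LCAux
/-- the error terms `ξ_k^i = Σ_{j≥2} (ν_j/ν₁)^k w_j^i` of the power
iteration are regular and converge weakly to `0`. -/
theorem xi_regular_weakTendsto_zero (n : ℕ) (hn : 2 ≤ n) [NeZero n]
    (ν : Fin n → LeviCivitaField ℂ)
    (hνfin : ∀ j, AtMostFinite (ν j))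
    (hν1 : coeff (ν 0) 0 = 1)
    (hνj : ∀ j : Fin n, j ≠ 0 → ‖coeff (ν j) 0‖ < 1)
    (r : Fin n → LeviCivitaField ℂ) (hr : ∀ j : Fin n, j ≠ 0 → r j * ν 0 = ν j)
    (w : Fin n → Fin n → LeviCivitaField ℂ)
    (hw : ∀ j : Fin n, j ≠ 0 → ∀ i, AtMostFinite (w j i)) (i : Fin n) :
    Regular (fun k => ∑ j ∈ Finset.univ.erase (0 : Fin n), r j ^ (k + 1) * w j i) ∧
      WeakTendsto (fun k => ∑ j ∈ Finset.univ.erase (0 : Fin n), r j ^ (k + 1) * w j i) 0 := by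
  classical
  open LCAux Filter in
  set E := Finset.univ.erase (0 : Fin n) with hE
  set ξ : ℕ → LeviCivitaField ℂ := fun k => ∑ j ∈ E, r j ^ (k + 1) * w j i with hξ
  have hkey : ∀ j : Fin n, ∃ V : Set ℚ, LeftFinite V ∧
      (j ≠ 0 → (∀ k : ℕ, supp (r j ^ (k + 1) * w j i) ⊆ V) ∧
        (∀ q : ℚ, Filter.Tendsto (fun k => coeff (r j ^ (k + 1) * w j i) q)
          Filter.atTop (nhds 0))) := by
    intro j
    by_cases hj : j = 0
    · exact ⟨∅, Set.finite_empty.leftFinite, fun h => absurd hj h⟩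
    · have h1 : AtMostFinite (r j) :=
        LCAux.amf_step1 (r j) (ν 0) (hνfin 0) hν1 (by rw [hr j hj]; exact hνfin j)
      have h2 : coeff (r j) 0 = coeff (ν j) 0 := by
        rw [← hr j hj]
        exact (LCAux.amf_step2 (r j) (ν 0) h1 (hνfin 0) hν1).symm
      have h3 : ‖coeff (r j) 0‖ < 1 := by rw [h2]; exact hνj j hj
      obtain ⟨V, hVlf, hVsupp, hVtend⟩ := LCAux.key2 (r j) (w j i) h1 h3 (hw j hj i)
      exact ⟨V, hVlf, fun _ => ⟨hVsupp, hVtend⟩⟩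
  choose V hVlf hVrest using hkey
  have hWlf : LeftFinite (⋃ j ∈ E, V j) := LCAux.lf_biUnion E V (fun j _ => hVlf j)
  have hsupp : ∀ k, supp (ξ k) ⊆ ⋃ j ∈ E, V j := by
    intro k
    refine (LCAux.supp_sum_subset E _).trans ?_
    intro q hq
    rw [Set.mem_iUnion₂] at hq ⊢
    obtain ⟨j, hj, hqj⟩ := hq
    exact ⟨j, hj, (hVrest j (Finset.ne_of_mem_erase hj)).1 k hqj⟩
  constructor
  · refine hWlf.mono ?_
    intro q hq
    rw [Set.mem_iUnion] at hq
    obtain ⟨k, hk⟩ := hq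
    exact hsupp k hk
  · intro ρ hρ
    have htd : ∀ q : ℚ, Filter.Tendsto (fun k => coeff (ξ k) q) Filter.atTop (nhds 0) := by
      intro q
      have h := tendsto_finset_sum E (fun j hj => (hVrest j (Finset.ne_of_mem_erase hj)).2 q)
      refine Filter.Tendsto.congr (fun k => (LCAux.coeff_sum E _ q).symm) (by simpa using h)
    have hN : ∀ q : ℚ, ∃ N : ℕ, ∀ k ≥ N, ‖coeff (ξ k) q‖ < ρ := by
      intro q
      obtain ⟨N, hNs⟩ := Metric.tendsto_atTop.mp (htd q) ρ hρ
      exact ⟨N, fun k hk => by simpa [dist_zero_right] using hNs k hk⟩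
    choose Nf hNf using hN
    obtain ⟨Q', hQ'⟩ := exists_rat_gt (1 / ρ)
    have hFfin : {q ∈ ⋃ j ∈ E, V j | q < Q'}.Finite := hWlf Q'
    refine ⟨hFfin.toFinset.sup Nf, ?_⟩
    intro k hk
    have hdom : {q : ℚ | (q : ℝ) ≤ 1 / ρ ∧ coeff (ξ k - 0) q ≠ 0}
        ⊆ {q ∈ ⋃ j ∈ E, V j | q < Q'} := by
      rintro q ⟨hqle, hqne⟩
      rw [sub_zero] at hqne
      exact ⟨hsupp k hqne, by exact_mod_cast lt_of_le_of_lt hqle hQ'⟩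
    show sSup ((fun q : ℚ => ‖coeff (ξ k - 0) q‖) ''
      {q : ℚ | (q : ℝ) ≤ 1 / ρ ∧ coeff (ξ k - 0) q ≠ 0}) < ρ
    set S := (fun q : ℚ => ‖coeff (ξ k - 0) q‖) ''
      {q : ℚ | (q : ℝ) ≤ 1 / ρ ∧ coeff (ξ k - 0) q ≠ 0} with hSdef
    have hSfin : S.Finite := (hFfin.subset hdom).image _
    have hSlt : ∀ s ∈ S, s < ρ := by
      rintro s ⟨q, hq, rfl⟩
      have hqF := hdom hq
      have hle : Nf q ≤ hFfin.toFinset.sup Nf :=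
        Finset.le_sup (hFfin.mem_toFinset.mpr hqF)
      have h := hNf q k (le_trans hle (le_of_lt hk))
      rw [sub_zero]
      exact h
    rcases S.eq_empty_or_nonempty with hS | hS
    · rw [hS, Real.sSup_empty]; exact hρ
    · exact hSlt _ (hS.csSup_mem hSfin)
end
end
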